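/- arXiv:1212.3137 — 8 statements merged into one kernel-verified Lean document; each statement's English description precedes it below -/
import Mathlib

section
/- Let U : [0,∞) → ℝ be continuous, nondecreasing and concave with U(0) > -∞, and suppose U(x) ≤ C(1 + x^p) for all x ≥ 0 for some C > 0 and 0 < p < 1. Define Ũ(y) = sup_{x ≥ 0} (U(x) − x·y) for y ≥ 0, and suppose Ũ(0) = sup_{x≥0} U(x) is finite and the right derivative d = Ũ'(0⁺) of Ũ at 0 is finite. Then for every x ≥ −d one has U(x) = Ũ(0), i.e. U attains its supremum at every point x ≥ −Ũ'(0⁺). -/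
open Real Set Filter Topology

/-- if the dual function `Ũ(y) = sup_{x ≥ 0}(U x - x y)` is finite at `0`
(i.e. the least upper bound exists for all `y ≥ 0`) and has a finite right derivative
`d` at `0`, then `U` attains its supremum `Ũ(0)` at every point `x ≥ -d`. -/
theorem stmt_1 (U : ℝ → ℝ) (C p : ℝ) (hC : 0 < C) (hp0 : 0 < p) (hp1 : p < 1)
    (hUcont : ContinuousOn U (Ici 0))
    (hUmono : MonotoneOn U (Ici 0))
    (hUconc : ConcaveOn ℝ (Ici 0) U)
    (hUgrowth : ∀ x ≥ (0 : ℝ), U x ≤ C * (1 + x ^ p))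
    (Ut : ℝ → ℝ)
    (hUt : ∀ y ≥ (0 : ℝ), IsLUB ((fun x => U x - x * y) '' Ici 0) (Ut y))
    (d : ℝ)
    (hd : HasDerivWithinAt Ut d (Ici 0) 0) :
    ∀ x ≥ -d, U x = Ut 0 := by
  have hM := hUt 0 le_rfl
  have hUle : ∀ x ≥ (0 : ℝ), U x ≤ Ut 0 := by
    intro x hx
    have := hM.1 ⟨x, hx, rfl⟩
    simpa using this
  have hset : Ici (0 : ℝ) \ {0} = Ioi 0 := by
    ext y
    simp only [mem_diff, mem_Ici, mem_singleton_iff, mem_Ioi]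
    constructor
    · rintro ⟨h1, h2⟩; exact lt_of_le_of_ne h1 (Ne.symm h2)
    · intro h; exact ⟨h.le, ne_of_gt h⟩
  have hslope : Tendsto (slope Ut 0) (𝓝[Ioi 0] 0) (𝓝 d) := by
    have := hasDerivWithinAt_iff_tendsto_slope.1 hd
    rwa [hset] at this
  -- general bound lemma: if `Ut y ≤ Ut 0 - c * y` for all small positive y, then d ≤ -c
  have key : ∀ x₁ > (0 : ℝ), U x₁ < Ut 0 → d ≤ -x₁ := by
    intro x₁ hx₁ hU1
    set y₀ : ℝ := (Ut 0 - U x₁) / x₁ with hy₀def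
    have hy₀ : 0 < y₀ := div_pos (sub_pos.2 hU1) hx₁
    have hbound : ∀ y, 0 < y → y < y₀ → Ut y ≤ Ut 0 - x₁ * y := by
      intro y hy hyy
      have hxy : x₁ * y < Ut 0 - U x₁ := by
        have := (lt_div_iff₀ hx₁).1 hyy
        linarith [this]
      refine (hUt y hy.le).2 ?_
      rintro _ ⟨x, hx, rfl⟩
      show U x - x * y ≤ Ut 0 - x₁ * y
      rcases le_or_gt x x₁ with h | h
      · have h1 : U x ≤ U x₁ := hUmono hx hx₁.le h
        have h2 : 0 ≤ x * y := mul_nonneg hx hy.le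
        linarith
      · have h1 : U x ≤ Ut 0 := hUle x hx
        have h2 : x₁ * y ≤ x * y := by nlinarith
        linarith
    refine le_of_tendsto hslope ?_
    filter_upwards [Ioo_mem_nhdsGT_of_mem (Set.mem_Ico.2 ⟨le_rfl, hy₀⟩)] with y hy
    have h1 := hbound y hy.1 hy.2
    rw [slope_def_field, sub_zero, div_le_iff₀ hy.1]
    linarith
  have hd0 : d ≤ 0 := by
    refine le_of_tendsto hslope ?_
    filter_upwards [self_mem_nhdsWithin] with y hy
    have h1 : Ut y ≤ Ut 0 := by
      refine (hUt y (le_of_lt hy)).2 ?_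
      rintro _ ⟨x, hx, rfl⟩
      show U x - x * y ≤ Ut 0
      have h3 : 0 ≤ x * y := mul_nonneg hx (le_of_lt hy)
      have h2 := hUle x hx
      linarith
    rw [slope_def_field, sub_zero, div_le_iff₀ hy]
    linarith
  intro x hx
  have hx0 : (0 : ℝ) ≤ x := le_trans (by linarith) hx
  have hle := hUle x hx0
  by_contra hne
  have hlt : U x < Ut 0 := lt_of_le_of_ne hle hne
  have hc : ContinuousWithinAt U (Ici 0) x := hUcont x hx0
  have hev : ∀ᶠ y in 𝓝[Ici 0] x, U y < Ut 0 := hc (Iio_mem_nhds hlt)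
  have hmono : 𝓝[Ioi x] x ≤ 𝓝[Ici 0] x :=
    nhdsWithin_mono x (fun y hy => le_trans hx0 (le_of_lt hy))
  have hev' : ∀ᶠ y in 𝓝[Ioi x] x, U y < Ut 0 := hev.filter_mono hmono
  obtain ⟨x₁, hx₁lt, hx₁mem⟩ := (hev'.and (eventually_mem_nhdsWithin)).exists
  have hx₁pos : 0 < x₁ := lt_of_le_of_lt hx0 hx₁mem
  have := key x₁ hx₁pos hx₁lt
  have hxd : -x ≤ d := neg_le.2 (neg_le.1 (by linarith))
  have : d < d := lt_of_le_of_lt this (by have h4 := mem_Ioi.1 hx₁mem; linarith)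
  exact lt_irrefl d this
end

section
/- Let Ũ : (0,∞) → ℝ be nonincreasing and convex, bounded below by a constant, and satisfying Ũ(y) ≤ C(1 + y^q) for all y > 0 for some C > 0 and q < 0. Fix τ > 0 and define v(y) = (2√(πτ))^{-1} ∫_{-∞}^{∞} e^{-x²/(4τ)} Ũ(y e^{x−τ}) dx for y > 0. Then lim_{y→0⁺} v(y) = lim_{y→0⁺} Ũ(y), where both limits are taken in the extended reals (−∞, +∞] (they exist by monotonicity). -/
open Real Set Filter MeasureTheory ProbabilityTheory Topology

/-!
With `X ~ N(0, 2τ)`, `v y = 𝔼 Ũ(y e^{X-τ})`, and `y e^{X-τ}` has mean `y`. Jensen's inequality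
(through a supporting line of `Ũ` at `y`) gives `Ũ y ≤ v y`, while `v y ≤ sup Ũ` trivially. Since
`Ũ` is nonincreasing, `Ũ y` increases to `sup Ũ` as `y ↓ 0`, and `v` is squeezed to the same limit
in `(-∞, +∞]`. Integrability of `Ũ(y e^{X-τ})` comes from bracketing it between a supporting line
and the growth bound, i.e. between combinations of `1`, `e^X` and `e^{qX}`, all Gaussian-integrable.
-/

lemma ConvexOn.add_rightDeriv_mul_sub_le {S : Set ℝ} {f : ℝ → ℝ} (hf : ConvexOn ℝ S f) {x y : ℝ}
    (hx : x ∈ interior S) (hy : y ∈ S) :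
    f x + derivWithin f (Ioi x) x * (y - x) ≤ f y := by
  rcases lt_trichotomy x y with hxy | rfl | hyx
  · have hslope := hf.rightDeriv_le_slope_of_mem_interior hx hy hxy
    rw [slope_def_field, le_div_iff₀ (sub_pos.2 hxy)] at hslope
    linarith
  · simp
  · have hslope := hf.slope_le_leftDeriv_of_mem_interior hy hx hyx
    rw [slope_def_field, div_le_iff₀ (sub_pos.2 hyx)] at hslope
    nlinarith [hf.leftDeriv_le_rightDeriv_of_mem_interior hx]

theorem ConvexOn.map_integral_le_of_mem_interior {α : Type*} [MeasurableSpace α] {μ : Measure α}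
    [IsProbabilityMeasure μ] {S : Set ℝ} {g : ℝ → ℝ} {X : α → ℝ} (hg : ConvexOn ℝ S g)
    (hXS : ∀ᵐ a ∂μ, X a ∈ S) (hmean : ∫ a, X a ∂μ ∈ interior S) (hX : Integrable X μ)
    (hgX : Integrable (fun a => g (X a)) μ) :
    g (∫ a, X a ∂μ) ≤ ∫ a, g (X a) ∂μ := by
  set m := ∫ a, X a ∂μ
  set k := derivWithin g (Ioi m) m
  have hdev : Integrable (fun a => k * (X a - m)) μ := (hX.sub (integrable_const m)).const_mul k
  calc g m = ∫ a, (g m + k * (X a - m)) ∂μ := by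
        rw [integral_add (integrable_const _) hdev, integral_const_mul,
          integral_sub hX (integrable_const m)]
        simp [m]
    _ ≤ ∫ a, g (X a) ∂μ :=
        integral_mono_ae ((integrable_const _).add hdev) hgX
          (hXS.mono fun a ha => hg.add_rightDeriv_mul_sub_le hmean ha)

lemma integral_gaussianReal_zero_two_mul {τ : ℝ} (hτ : 0 < τ) (f : ℝ → ℝ) :
    ∫ x, f x ∂gaussianReal 0 (2 * τ).toNNReal
      = (2 * √(π * τ))⁻¹ * ∫ x, exp (-x ^ 2 / (4 * τ)) * f x := by
  have hv : (2 * τ).toNNReal ≠ 0 := by simpa using hτ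
  have hsqrt : √(2 * π * (2 * τ)) = 2 * √(π * τ) := by
    rw [show 2 * π * (2 * τ) = 2 ^ 2 * (π * τ) by ring, sqrt_mul (by positivity),
      sqrt_sq zero_le_two]
  rw [integral_gaussianReal_eq_integral_smul hv, ← integral_const_mul]
  congr 1 with x
  rw [gaussianPDFReal_def, Real.coe_toNNReal _ (by positivity), hsqrt, smul_eq_mul]
  ring_nf

lemma integrable_exp_mul_sub_gaussianReal (m : ℝ) (v : NNReal) (t c : ℝ) :
    Integrable (fun x => exp (t * (x - c))) (gaussianReal m v) := by
  simpa [mul_sub, exp_sub] using (integrable_exp_mul_gaussianReal (μ := m) (v := v) t).div_const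
    (exp (t * c))

lemma integral_exp_sub_gaussianReal {τ : ℝ} (hτ : 0 ≤ τ) :
    ∫ x, exp (x - τ) ∂gaussianReal 0 (2 * τ).toNNReal = 1 := by
  have hmgf := congrFun (mgf_id_gaussianReal (μ := 0) (v := (2 * τ).toNNReal)) 1
  simp only [mgf, id, one_mul, Real.coe_toNNReal _ (by positivity : 0 ≤ 2 * τ)] at hmgf
  simp_rw [exp_sub]
  rw [integral_div, hmgf]
  field_simp
  ring_nf

lemma ConvexOn.integrable_comp_mul_exp_gaussianReal {f : ℝ → ℝ} {C q y c m : ℝ} {v : NNReal}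
    (hf : ConvexOn ℝ (Ioi 0) f) (hgrowth : ∀ z > 0, f z ≤ C * (1 + z ^ q)) (hy : 0 < y) :
    Integrable (fun x => f (y * exp (x - c))) (gaussianReal m v) := by
  have hpos : ∀ x, 0 < y * exp (x - c) := fun x => by positivity
  have hcont : Continuous fun x => f (y * exp (x - c)) :=
    (hf.continuousOn isOpen_Ioi).comp_continuous (by fun_prop) hpos
  refine integrable_of_le_of_le
    (g₁ := fun x => f 1 + derivWithin f (Ioi 1) 1 * (y * exp (1 * (x - c)) - 1))
    (g₂ := fun x => C * (1 + y ^ q * exp (q * (x - c)))) hcont.aestronglyMeasurable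
    (ae_of_all _ fun x => ?_) (ae_of_all _ fun x => ?_) ?_ ?_
  · simpa using hf.add_rightDeriv_mul_sub_le (by simp) (hpos x)
  · have hpow : (y * exp (x - c)) ^ q = y ^ q * exp (q * (x - c)) := by
      rw [mul_rpow hy.le (exp_pos _).le, ← exp_mul, mul_comm (x - c)]
    simpa [hpow] using hgrowth _ (hpos x)
  · exact (integrable_const _).add
      (((integrable_exp_mul_sub_gaussianReal m v 1 c).const_mul y).sub (integrable_const 1)
        |>.const_mul _)
  · exact ((integrable_const 1).add
      ((integrable_exp_mul_sub_gaussianReal m v q c).const_mul _)).const_mul C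

lemma exists_tendsto_nhdsGT_of_antitoneOn_of_le {a : ℝ} {f g : ℝ → ℝ}
    (hf : AntitoneOn f (Ioi a)) (hfg : ∀ y > a, f y ≤ g y)
    (hg : ∀ B : ℝ, (∀ z > a, f z ≤ B) → ∀ y > a, g y ≤ B) :
    ∃ L : EReal, Tendsto (fun y => (f y : EReal)) (𝓝[>] a) (𝓝 L) ∧
      Tendsto (fun y => (g y : EReal)) (𝓝[>] a) (𝓝 L) := by
  have hfE : AntitoneOn (fun y => (f y : EReal)) (Ioi a) := fun x hx y hy hxy =>
    EReal.coe_le_coe_iff.2 (hf hx hy hxy)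
  set L := sSup ((fun y => (f y : EReal)) '' Ioi a)
  have hfL : Tendsto (fun y => (f y : EReal)) (𝓝[>] a) (𝓝 L) :=
    hfE.tendsto_nhdsGT (OrderTop.bddAbove _)
  have hgL : ∀ y > a, (g y : EReal) ≤ L := fun y hy => EReal.le_of_forall_lt_iff_le.1
    fun B hLB => EReal.coe_le_coe_iff.2 <| hg B (fun z hz => EReal.coe_le_coe_iff.1 <|
      (le_sSup (mem_image_of_mem _ hz)).trans hLB.le) y hy
  refine ⟨L, hfL, tendsto_of_tendsto_of_tendsto_of_le_of_le' hfL tendsto_const_nhds ?_ ?_⟩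
  · filter_upwards [self_mem_nhdsWithin] with y hy using EReal.coe_le_coe_iff.2 (hfg y hy)
  · filter_upwards [self_mem_nhdsWithin] with y hy using hgL y hy

theorem stmt_2_general (Ut : ℝ → ℝ) (C q τ : ℝ) (hτ : 0 < τ)
    (hmono : AntitoneOn Ut (Ioi 0))
    (hconv : ConvexOn ℝ (Ioi 0) Ut)
    (hgrowth : ∀ y > (0 : ℝ), Ut y ≤ C * (1 + y ^ q)) :
    let v : ℝ → ℝ := fun y =>
      (2 * Real.sqrt (Real.pi * τ))⁻¹ *
        ∫ x : ℝ, Real.exp (-x ^ 2 / (4 * τ)) * Ut (y * Real.exp (x - τ))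
    ∃ L : EReal,
      Tendsto (fun y => (Ut y : EReal)) (nhdsWithin 0 (Ioi 0)) (nhds L) ∧
      Tendsto (fun y => (v y : EReal)) (nhdsWithin 0 (Ioi 0)) (nhds L) := by
  intro v
  set μ := gaussianReal 0 (2 * τ).toNNReal
  have hv : ∀ y, v y = ∫ x, Ut (y * exp (x - τ)) ∂μ := fun y =>
    (integral_gaussianReal_zero_two_mul hτ _).symm
  have hint : ∀ y > 0, Integrable (fun x => Ut (y * exp (x - τ))) μ := fun y hy =>
    hconv.integrable_comp_mul_exp_gaussianReal hgrowth hy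
  refine exists_tendsto_nhdsGT_of_antitoneOn_of_le hmono (fun y hy => ?_) (fun B hB y hy => ?_)
  · have hmean : ∫ x, y * exp (x - τ) ∂μ = y := by
      rw [integral_const_mul, integral_exp_sub_gaussianReal hτ.le, mul_one]
    calc Ut y = Ut (∫ x, y * exp (x - τ) ∂μ) := by rw [hmean]
      _ ≤ ∫ x, Ut (y * exp (x - τ)) ∂μ := hconv.map_integral_le_of_mem_interior
          (ae_of_all _ fun x => (by positivity : 0 < y * exp (x - τ)))
          (by rwa [hmean, interior_Ioi])
          (by simpa using (integrable_exp_mul_sub_gaussianReal 0 _ 1 τ).const_mul y) (hint y hy)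
      _ = v y := (hv y).symm
  · calc v y = ∫ x, Ut (y * exp (x - τ)) ∂μ := hv y
      _ ≤ ∫ _, B ∂μ := integral_mono (hint y hy) (integrable_const B) fun x => hB _ (by positivity)
      _ = B := by simp

/-- the Gaussian-smoothed dual value function
`v(y) = (2√(πτ))⁻¹ ∫ e^{-x²/(4τ)} Ũ(y e^{x-τ}) dx`
has the same limit as `Ũ` as `y → 0⁺`, in the extended reals. -/
theorem stmt_2 (Ut : ℝ → ℝ) (C q M τ : ℝ) (hC : 0 < C) (hq : q < 0) (hτ : 0 < τ)
    (hmono : AntitoneOn Ut (Ioi 0))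
    (hconv : ConvexOn ℝ (Ioi 0) Ut)
    (hbdd : ∀ y > (0 : ℝ), M ≤ Ut y)
    (hgrowth : ∀ y > (0 : ℝ), Ut y ≤ C * (1 + y ^ q)) :
    let v : ℝ → ℝ := fun y =>
      (2 * Real.sqrt (Real.pi * τ))⁻¹ *
        ∫ x : ℝ, Real.exp (-x ^ 2 / (4 * τ)) * Ut (y * Real.exp (x - τ))
    ∃ L : EReal,
      Tendsto (fun y => (Ut y : EReal)) (nhdsWithin 0 (Ioi 0)) (nhds L) ∧
      Tendsto (fun y => (v y : EReal)) (nhdsWithin 0 (Ioi 0)) (nhds L) :=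
  stmt_2_general Ut C q τ hτ hmono hconv hgrowth
end

section
/- Let Ũ : (0,∞) → ℝ be nonincreasing and convex, bounded below, satisfying Ũ(y) ≤ C(1 + y^q) for all y > 0 for some C > 0 and q < 0. Fix τ > 0 and define v(y) = (2√(πτ))^{-1} ∫_{-∞}^{∞} e^{-x²/(4τ)} Ũ(y e^{x−τ}) dx for y > 0. Then v is differentiable on (0,∞) with v'(y) = (2√(πτ))^{-1} ∫_{-∞}^{∞} e^{-(x−2τ)²/(4τ)} D⁺Ũ(y e^{x−τ}) dx, where D⁺Ũ denotes the right derivative of Ũ (which exists everywhere by convexity), and lim_{y→0⁺} v'(y) = lim_{y→0⁺} D⁺Ũ(y), the limits taken in [−∞, 0]. -/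
open Real Set Filter MeasureTheory Topology

/-!
Write `v y = c ∫ K x * Ũ (y * exp (x - τ))` with the heat kernel `K x = exp (-x² / (4τ))`.
The right derivative `D⁺Ũ` of the convex function `Ũ` is monotone, hence continuous off a countable
set, and wherever it is continuous `Ũ` is differentiable. On a ball around `y₀` the integrands are
uniformly Lipschitz in `y`: a convex function bounded by `B` on a ball is `2B/ε`-Lipschitz on the
ball of radius smaller by `ε`, and monotonicity with the growth bound give
`B ≤ const * (1 + exp (q x))`, which is integrable against `K`. Differentiating under the integral
gives `v' y = c ∫ K x * exp (x - τ) * D⁺Ũ (y * exp (x - τ))`, and `K x * exp (x - τ)` is the heat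
kernel centred at `2τ`.

As `y → 0⁺`, `D⁺Ũ y` decreases to `L = inf D⁺Ũ ≤ 0`. If `L` is finite, dominated convergence gives
`v' y → L`. If `L = -∞`, the kernel mass `p > 0` on `x ≤ τ`, where `D⁺Ũ (y * exp (x - τ)) ≤ D⁺Ũ y`,
already gives `v' y ≤ p * D⁺Ũ y → -∞`.
-/

section Gaussian

variable {τ : ℝ}

lemma integrable_exp_neg_sq_div_add_mul (hτ : 0 < τ) (c : ℝ) :
    Integrable fun x : ℝ => exp (-x ^ 2 / (4 * τ) + c * x) := by
  -- complete the square: `-x²/(4τ) + cx = -(x - 2τc)²/(4τ) + τc²`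
  have h := ((integrable_exp_neg_mul_sq (b := 1 / (4 * τ)) (by positivity)).comp_sub_right
    (2 * τ * c)).const_mul (exp (τ * c ^ 2))
  refine h.congr (Eventually.of_forall fun x => ?_)
  simp only [← exp_add]
  congr 1
  field_simp
  ring

lemma integrable_exp_neg_sub_sq_div (hτ : 0 < τ) (c : ℝ) :
    Integrable fun x : ℝ => exp (-(x - c) ^ 2 / (4 * τ)) := by
  refine ((integrable_exp_neg_mul_sq (b := 1 / (4 * τ)) (by positivity)).comp_sub_right c).congr
    (Eventually.of_forall fun x => ?_)
  simp only
  congr 1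
  ring

lemma integral_exp_neg_sub_sq_div (hτ : 0 < τ) (c : ℝ) :
    ∫ x : ℝ, exp (-(x - c) ^ 2 / (4 * τ)) = 2 * √(π * τ) := by
  have h (x : ℝ) : exp (-(x - c) ^ 2 / (4 * τ)) = exp (-(1 / (4 * τ)) * (x - c) ^ 2) := by
    congr 1
    ring
  simp_rw [h]
  rw [integral_sub_right_eq_self (fun x => exp (-(1 / (4 * τ)) * x ^ 2)) c, integral_gaussian,
    show π / (1 / (4 * τ)) = 2 ^ 2 * (π * τ) by field_simp; ring, sqrt_mul (by positivity),
    sqrt_sq (by norm_num)]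

lemma exp_neg_sq_div_mul_exp_sub (hτ : 0 < τ) (x : ℝ) :
    exp (-x ^ 2 / (4 * τ)) * exp (x - τ) = exp (-(x - 2 * τ) ^ 2 / (4 * τ)) := by
  rw [← exp_add]
  congr 1
  field_simp
  ring

lemma integrable_exp_neg_sq_div_mul_add_rpow (hτ : 0 < τ) {y : ℝ} (hy : 0 < y) (A B q : ℝ) :
    Integrable fun x : ℝ => exp (-x ^ 2 / (4 * τ)) * (A + B * (y * exp (x - τ)) ^ q) := by
  refine (((integrable_exp_neg_sq_div_add_mul hτ 0).const_mul A).add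
    ((integrable_exp_neg_sq_div_add_mul hτ q).const_mul (B * y ^ q * exp (-(q * τ))))).congr
    (Eventually.of_forall fun x => ?_)
  simp only [Pi.add_apply, zero_mul, add_zero]
  rw [mul_rpow hy.le (exp_pos _).le, ← exp_mul, show (x - τ) * q = -(q * τ) + q * x by ring,
    exp_add, exp_add]
  ring

lemma setIntegral_Iic_exp_neg_sub_sq_div_pos (hτ : 0 < τ) (a c : ℝ) :
    0 < ∫ x in Iic a, exp (-(x - c) ^ 2 / (4 * τ)) := by
  rw [setIntegral_pos_iff_support_of_nonneg_ae (Eventually.of_forall fun x => (exp_pos _).le)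
    (integrable_exp_neg_sub_sq_div hτ c).integrableOn]
  simp [Function.support, (exp_pos _).ne']

end Gaussian

namespace ConvexOn

variable {s : Set ℝ} {f f' : ℝ → ℝ} {x y : ℝ}

lemma slope_le_of_hasDerivWithinAt_Ioi_of_mem_interior (hf : ConvexOn ℝ s f) (hx : x ∈ s)
    (hy : y ∈ interior s) (hxy : x < y) {d : ℝ} (hd : HasDerivWithinAt f d (Ioi y) y) :
    slope f x y ≤ d :=
  calc slope f x y ≤ derivWithin f (Iio y) y :=
        hf.slope_le_of_hasDerivWithinAt_Iio hx (interior_subset hy) hxy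
          (hf.hasDerivWithinAt_leftDeriv_of_mem_interior hy)
    _ ≤ derivWithin f (Ioi y) y := hf.leftDeriv_le_rightDeriv_of_mem_interior hy
    _ = d := hd.derivWithin (uniqueDiffWithinAt_Ioi y)

lemma monotoneOn_of_hasDerivWithinAt_Ioi (hf : ConvexOn ℝ s f) (hs : IsOpen s)
    (hf' : ∀ y ∈ s, HasDerivWithinAt f (f' y) (Ioi y) y) : MonotoneOn f' s := by
  intro x hx y hy hxy
  rcases hxy.eq_or_lt with rfl | hlt
  · rfl
  exact (hf.le_slope_of_hasDerivWithinAt_Ioi hx hy hlt (hf' x hx)).trans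
    (hf.slope_le_of_hasDerivWithinAt_Ioi_of_mem_interior hx (by rwa [hs.interior_eq]) hlt
      (hf' y hy))

lemma hasDerivAt_of_continuousAt (hf : ConvexOn ℝ s f) (hs : IsOpen s)
    (hf' : ∀ y ∈ s, HasDerivWithinAt f (f' y) (Ioi y) y) (hx : x ∈ s) (hc : ContinuousAt f' x) :
    HasDerivAt f (f' x) x := by
  have hbetween : ∀ᶠ u in 𝓝[≠] x,
      min (f' u) (f' x) ≤ slope f x u ∧ slope f x u ≤ max (f' u) (f' x) := by
    filter_upwards [nhdsWithin_le_nhds (hs.mem_nhds hx), self_mem_nhdsWithin] with u hu hux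
    have hx' : x ∈ interior s := by rwa [hs.interior_eq]
    have hu' : u ∈ interior s := by rwa [hs.interior_eq]
    rcases lt_or_gt_of_ne hux with hlt | hlt
    · rw [slope_comm]
      exact ⟨min_le_left _ _ |>.trans (hf.le_slope_of_hasDerivWithinAt_Ioi hu hx hlt (hf' u hu)),
        (hf.slope_le_of_hasDerivWithinAt_Ioi_of_mem_interior hu hx' hlt (hf' x hx)).trans
          (le_max_right _ _)⟩
    · exact ⟨min_le_right _ _ |>.trans (hf.le_slope_of_hasDerivWithinAt_Ioi hx hu hlt (hf' x hx)),
        (hf.slope_le_of_hasDerivWithinAt_Ioi_of_mem_interior hx hu' hlt (hf' u hu)).trans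
          (le_max_left _ _)⟩
  have hlim : Tendsto f' (𝓝[≠] x) (𝓝 (f' x)) := hc.tendsto.mono_left nhdsWithin_le_nhds
  rw [hasDerivAt_iff_tendsto_slope]
  refine tendsto_of_tendsto_of_tendsto_of_le_of_le' ?_ ?_ (hbetween.mono fun _ h => h.1)
    (hbetween.mono fun _ h => h.2)
  · simpa using hlim.min (tendsto_const_nhds (x := f' x))
  · simpa using hlim.max (tendsto_const_nhds (x := f' x))

lemma countable_not_hasDerivAt (hf : ConvexOn ℝ s f) (hs : IsOpen s)
    (hf' : ∀ y ∈ s, HasDerivWithinAt f (f' y) (Ioi y) y) :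
    {x ∈ s | ¬HasDerivAt f (f' x) x}.Countable :=
  (hf.monotoneOn_of_hasDerivWithinAt_Ioi hs hf').countable_not_continuousWithinAt.mono <| by
    rintro x ⟨hx, hnd⟩
    exact ⟨hx, fun hc =>
      hnd (hf.hasDerivAt_of_continuousAt hs hf' hx (hc.continuousAt (hs.mem_nhds hx)))⟩

end ConvexOn

lemma HasDerivWithinAt.nonpos_of_antitoneOn_Ioi {f : ℝ → ℝ} {d x : ℝ}
    (hd : HasDerivWithinAt f d (Ioi x) x) (hf : AntitoneOn f (Ioi x)) : d ≤ 0 :=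
  hd.nonpos_of_antitoneOn (accPt_principal_iff_nhdsWithin.2 <| by
    rw [sdiff_singleton_eq_self self_notMem_Ioi]; infer_instance) hf

lemma MonotoneOn.comp_mul_exp_sub {h : ℝ → ℝ} (hh : MonotoneOn h (Ioi 0)) {y : ℝ} (hy : 0 < y)
    (τ : ℝ) : Monotone fun x => h (y * exp (x - τ)) := fun a b hab =>
  hh (by simp only [mem_Ioi]; positivity) (by simp only [mem_Ioi]; positivity) (by gcongr)

section SmoothedIntegral

variable {Ut g : ℝ → ℝ} {C q M τ : ℝ}

lemma abs_le_of_antitoneOn_of_le_rpow (hmono : AntitoneOn Ut (Ioi 0))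
    (hbdd : ∀ y > (0 : ℝ), M ≤ Ut y) (hgrowth : ∀ y > (0 : ℝ), Ut y ≤ C * (1 + y ^ q))
    {a z : ℝ} (ha : 0 < a) (haz : a ≤ z) : |Ut z| ≤ |M| + |C| * (1 + a ^ q) := by
  have hlow := hbdd z (ha.trans_le haz)
  have hup : Ut z ≤ C * (1 + a ^ q) := (hmono ha (ha.trans_le haz) haz).trans (hgrowth a ha)
  have hC : C * (1 + a ^ q) ≤ |C| * (1 + a ^ q) :=
    mul_le_mul_of_nonneg_right (le_abs_self C) (by positivity)
  have hCnonneg : 0 ≤ |C| * (1 + a ^ q) := by positivity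
  rw [abs_le]
  constructor <;> linarith [neg_abs_le M, le_abs_self M]

lemma lipschitzOnWith_comp_mul (hmono : AntitoneOn Ut (Ioi 0)) (hconv : ConvexOn ℝ (Ioi 0) Ut)
    (hbdd : ∀ y > (0 : ℝ), M ≤ Ut y) (hgrowth : ∀ y > (0 : ℝ), Ut y ≤ C * (1 + y ^ q))
    {a y₀ : ℝ} (ha : 0 < a) (hy₀ : 0 < y₀) :
    LipschitzOnWith (8 / y₀ * (|M| + |C| * (1 + (y₀ / 4 * a) ^ q))).toNNReal
      (fun y => Ut (y * a)) (Metric.ball y₀ (y₀ / 2)) := by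
  have hball {y : ℝ} (hy : dist y y₀ < 3 * y₀ / 4) : y₀ / 4 < y := by
    rw [Real.dist_eq, abs_lt] at hy
    linarith
  have hconv' : ConvexOn ℝ (Metric.ball y₀ (3 * y₀ / 4)) fun y => Ut (y * a) :=
    (hconv.comp_linearMap (LinearMap.mulRight ℝ a)).subset
      (fun y hy => mul_pos (by linarith [hball hy]) ha)
      (convex_ball _ _)
  set B := |M| + |C| * (1 + (y₀ / 4 * a) ^ q)
  have h := hconv'.lipschitzOnWith_of_abs_le (ε := y₀ / 4) (M := B) (by positivity) fun y hy =>
    abs_le_of_antitoneOn_of_le_rpow hmono hbdd hgrowth (by positivity)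
      (mul_le_mul_of_nonneg_right (hball hy).le ha.le)
  rwa [show 3 * y₀ / 4 - y₀ / 4 = y₀ / 2 by ring,
    show 2 * B / (y₀ / 4) = 8 / y₀ * B by field_simp; ring] at h

lemma integrable_exp_neg_sq_div_mul_comp (hτ : 0 < τ) (hmono : AntitoneOn Ut (Ioi 0))
    (hconv : ConvexOn ℝ (Ioi 0) Ut) (hbdd : ∀ y > (0 : ℝ), M ≤ Ut y)
    (hgrowth : ∀ y > (0 : ℝ), Ut y ≤ C * (1 + y ^ q)) {y : ℝ} (hy : 0 < y) :
    Integrable fun x : ℝ => exp (-x ^ 2 / (4 * τ)) * Ut (y * exp (x - τ)) := by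
  have hcont : Continuous fun x : ℝ => Ut (y * exp (x - τ)) :=
    (hconv.continuousOn isOpen_Ioi).comp_continuous (by fun_prop) fun x => by
      simp only [mem_Ioi]; positivity
  refine (integrable_exp_neg_sq_div_mul_add_rpow hτ hy (|M| + |C|) |C| q).mono'
    ((by fun_prop : Continuous fun x : ℝ => exp (-x ^ 2 / (4 * τ))).mul hcont).aestronglyMeasurable
    (Eventually.of_forall fun x => ?_)
  have hz : 0 < y * exp (x - τ) := by positivity
  rw [norm_mul, Real.norm_of_nonneg (exp_pos _).le, Real.norm_eq_abs]
  calc exp (-x ^ 2 / (4 * τ)) * |Ut (y * exp (x - τ))|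
      ≤ exp (-x ^ 2 / (4 * τ)) * (|M| + |C| * (1 + (y * exp (x - τ)) ^ q)) := by
        gcongr
        exact abs_le_of_antitoneOn_of_le_rpow hmono hbdd hgrowth hz le_rfl
    _ = _ := by ring

lemma ae_hasDerivAt_comp_mul_exp (hconv : ConvexOn ℝ (Ioi 0) Ut)
    (hg : ∀ y > (0 : ℝ), HasDerivWithinAt Ut (g y) (Ioi y) y) {y₀ : ℝ} (hy₀ : 0 < y₀) :
    ∀ᵐ x : ℝ, HasDerivAt (fun y => Ut (y * exp (x - τ)))
      (g (y₀ * exp (x - τ)) * exp (x - τ)) y₀ := by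
  have hinj : Function.Injective fun x : ℝ => y₀ * exp (x - τ) := fun x x' h => by
    simpa using mul_left_cancel₀ hy₀.ne' h
  filter_upwards [((hconv.countable_not_hasDerivAt isOpen_Ioi hg).preimage hinj).ae_notMem volume]
    with x hx
  have hz : y₀ * exp (x - τ) ∈ Ioi 0 := by simp only [mem_Ioi]; positivity
  have hd : HasDerivAt Ut (g (y₀ * exp (x - τ))) (y₀ * exp (x - τ)) :=
    not_not.mp fun h => hx ⟨hz, h⟩
  exact hd.comp y₀ (hasDerivAt_mul_const _)

lemma hasDerivAt_integral_exp_neg_sq_div_mul_comp (hτ : 0 < τ) (hmono : AntitoneOn Ut (Ioi 0))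
    (hconv : ConvexOn ℝ (Ioi 0) Ut) (hbdd : ∀ y > (0 : ℝ), M ≤ Ut y)
    (hgrowth : ∀ y > (0 : ℝ), Ut y ≤ C * (1 + y ^ q))
    (hg : ∀ y > (0 : ℝ), HasDerivWithinAt Ut (g y) (Ioi y) y) {y₀ : ℝ} (hy₀ : 0 < y₀) :
    Integrable (fun x : ℝ => exp (-(x - 2 * τ) ^ 2 / (4 * τ)) * g (y₀ * exp (x - τ))) ∧
      HasDerivAt (fun y => ∫ x : ℝ, exp (-x ^ 2 / (4 * τ)) * Ut (y * exp (x - τ)))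
        (∫ x : ℝ, exp (-(x - 2 * τ) ^ 2 / (4 * τ)) * g (y₀ * exp (x - τ))) y₀ := by
  set Lip : ℝ → ℝ := fun x => 8 / y₀ * (|M| + |C| * (1 + (y₀ / 4 * exp (x - τ)) ^ q))
  refine hasDerivAt_integral_of_dominated_loc_of_lip (Metric.ball_mem_nhds y₀ (half_pos hy₀))
    (bound := fun x => exp (-x ^ 2 / (4 * τ)) * Lip x) ?_
    (integrable_exp_neg_sq_div_mul_comp hτ hmono hconv hbdd hgrowth hy₀) ?_ ?_ ?_ ?_
  · filter_upwards [eventually_gt_nhds hy₀] with y hy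
    exact (integrable_exp_neg_sq_div_mul_comp hτ hmono hconv hbdd hgrowth hy).aestronglyMeasurable
  · exact ((by fun_prop : Continuous fun x : ℝ => exp (-(x - 2 * τ) ^ 2 / (4 * τ))).measurable.mul
      ((hconv.monotoneOn_of_hasDerivWithinAt_Ioi isOpen_Ioi hg).comp_mul_exp_sub hy₀
        τ).measurable).aestronglyMeasurable
  · refine Eventually.of_forall fun x => ?_
    have hLip :=
      (lipschitzOnWith_comp_mul hmono hconv hbdd hgrowth (exp_pos (x - τ)) hy₀).dist_le_mul
    have hLip0 : 0 ≤ Lip x := by positivity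
    rw [Real.coe_toNNReal _ hLip0] at hLip
    refine LipschitzOnWith.of_dist_le_mul fun y hy y' hy' => ?_
    rw [Real.coe_nnabs, abs_of_nonneg (by positivity), Real.dist_eq, ← mul_sub, abs_mul,
      abs_of_pos (exp_pos _), mul_assoc]
    exact mul_le_mul_of_nonneg_left (hLip y hy y' hy') (exp_pos _).le
  · refine (integrable_exp_neg_sq_div_mul_add_rpow hτ (by positivity : 0 < y₀ / 4)
      (8 / y₀ * (|M| + |C|)) (8 / y₀ * |C|) q).congr (Eventually.of_forall fun x => ?_)
    simp only [Lip]
    ring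
  · filter_upwards [ae_hasDerivAt_comp_mul_exp hconv hg hy₀] with x hx
    refine (hx.const_mul (exp (-x ^ 2 / (4 * τ)))).congr_deriv ?_
    rw [← exp_neg_sq_div_mul_exp_sub hτ]
    ring

end SmoothedIntegral

lemma tendsto_mul_const_nhdsGT_zero {a : ℝ} (ha : 0 < a) :
    Tendsto (fun y : ℝ => y * a) (𝓝[>] 0) (𝓝[>] 0) :=
  tendsto_nhdsWithin_of_tendsto_nhds_of_eventually_within _
    (by simpa using (tendsto_id.mul_const a).mono_left (nhdsWithin_le_nhds (a := (0 : ℝ))))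
    (eventually_nhdsWithin_of_forall fun _ hy => mul_pos hy ha)

section Limits

variable {h : ℝ → ℝ} {τ : ℝ}

lemma MonotoneOn.exists_tendsto_nhdsGT_zero (hh : MonotoneOn h (Ioi 0)) :
    ∃ L : EReal, (∀ z > (0 : ℝ), L ≤ h z) ∧ Tendsto (fun y => (h y : EReal)) (𝓝[>] 0) (𝓝 L) :=
  ⟨sInf ((fun z => (h z : EReal)) '' Ioi 0), fun z hz => sInf_le ⟨z, hz, rfl⟩,
    MonotoneOn.tendsto_nhdsGT (fun _ ha _ hb hab => EReal.coe_le_coe_iff.2 (hh ha hb hab))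
      (OrderBot.bddBelow _)⟩

lemma tendsto_integral_exp_neg_sub_sq_div_mul_comp (hτ : 0 < τ) (hh : MonotoneOn h (Ioi 0))
    {B l : ℝ} (hB : ∀ z > (0 : ℝ), |h z| ≤ B) (hl : Tendsto h (𝓝[>] 0) (𝓝 l)) :
    Tendsto (fun y => (2 * √(π * τ))⁻¹ *
        ∫ x : ℝ, exp (-(x - 2 * τ) ^ 2 / (4 * τ)) * h (y * exp (x - τ)))
      (𝓝[>] 0) (𝓝 l) := by
  have hDCT : Tendsto (fun y => ∫ x : ℝ, exp (-(x - 2 * τ) ^ 2 / (4 * τ)) * h (y * exp (x - τ)))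
      (𝓝[>] 0) (𝓝 (∫ x : ℝ, exp (-(x - 2 * τ) ^ 2 / (4 * τ)) * l)) := by
    refine tendsto_integral_filter_of_dominated_convergence
      (fun x => exp (-(x - 2 * τ) ^ 2 / (4 * τ)) * B) ?_ ?_
      ((integrable_exp_neg_sub_sq_div hτ _).mul_const B)
      (Eventually.of_forall fun x =>
        (hl.comp (tendsto_mul_const_nhdsGT_zero (exp_pos _))).const_mul _)
    · filter_upwards [self_mem_nhdsWithin] with y hy
      exact ((by fun_prop : Continuous fun x : ℝ => exp (-(x - 2 * τ) ^ 2 / (4 * τ))).measurable.mul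
        (hh.comp_mul_exp_sub hy τ).measurable).aestronglyMeasurable
    · filter_upwards [self_mem_nhdsWithin] with y hy
      refine Eventually.of_forall fun x => ?_
      rw [norm_mul, Real.norm_of_nonneg (exp_pos _).le, Real.norm_eq_abs]
      gcongr
      exact hB _ (by simp only [mem_Ioi] at hy; positivity)
  rw [integral_mul_const, integral_exp_neg_sub_sq_div hτ] at hDCT
  have hsqrt : 0 < √(π * τ) := sqrt_pos.2 (by positivity)
  convert hDCT.const_mul (2 * √(π * τ))⁻¹ using 2
  field_simp

lemma integral_exp_neg_sub_sq_div_mul_comp_le (hτ : 0 < τ) (hh : MonotoneOn h (Ioi 0))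
    (hh0 : ∀ z > (0 : ℝ), h z ≤ 0) {y : ℝ} (hy : 0 < y)
    (hint : Integrable fun x : ℝ => exp (-(x - 2 * τ) ^ 2 / (4 * τ)) * h (y * exp (x - τ))) :
    ∫ x : ℝ, exp (-(x - 2 * τ) ^ 2 / (4 * τ)) * h (y * exp (x - τ)) ≤
      (∫ x in Iic τ, exp (-(x - 2 * τ) ^ 2 / (4 * τ))) * h y := by
  rw [← integral_add_compl measurableSet_Iic hint, ← integral_mul_const]
  have hIic : ∫ x in Iic τ, exp (-(x - 2 * τ) ^ 2 / (4 * τ)) * h (y * exp (x - τ)) ≤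
      ∫ x in Iic τ, exp (-(x - 2 * τ) ^ 2 / (4 * τ)) * h y := by
    refine setIntegral_mono_on hint.integrableOn
      ((integrable_exp_neg_sub_sq_div hτ _).mul_const _).integrableOn measurableSet_Iic
      fun x hx => mul_le_mul_of_nonneg_left ?_ (exp_pos _).le
    refine hh (by simp only [mem_Ioi]; positivity) hy ?_
    calc y * exp (x - τ) ≤ y * exp 0 := by gcongr; exact sub_nonpos.2 hx
      _ = y := by rw [exp_zero, mul_one]
  have hcompl : ∫ x in (Iic τ)ᶜ, exp (-(x - 2 * τ) ^ 2 / (4 * τ)) * h (y * exp (x - τ)) ≤ 0 :=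
    integral_nonpos fun x => mul_nonpos_of_nonneg_of_nonpos (exp_pos _).le (hh0 _ (by positivity))
  exact (add_le_add hIic hcompl).trans_eq (add_zero _)

lemma tendsto_integral_exp_neg_sub_sq_div_mul_comp_bot (hτ : 0 < τ) (hh : MonotoneOn h (Ioi 0))
    (hh0 : ∀ z > (0 : ℝ), h z ≤ 0)
    (hint : ∀ y > (0 : ℝ),
      Integrable fun x : ℝ => exp (-(x - 2 * τ) ^ 2 / (4 * τ)) * h (y * exp (x - τ)))
    (hbot : Tendsto (fun z => (h z : EReal)) (𝓝[>] 0) (𝓝 ⊥)) :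
    Tendsto (fun y => (((2 * √(π * τ))⁻¹ *
        ∫ x : ℝ, exp (-(x - 2 * τ) ^ 2 / (4 * τ)) * h (y * exp (x - τ)) : ℝ) : EReal))
      (𝓝[>] 0) (𝓝 ⊥) := by
  set p := (2 * √(π * τ))⁻¹ * ∫ x in Iic τ, exp (-(x - 2 * τ) ^ 2 / (4 * τ))
  have hp : 0 < p := mul_pos (by positivity) (setIntegral_Iic_exp_neg_sub_sq_div_pos hτ _ _)
  rw [EReal.tendsto_nhds_bot_iff_real] at hbot ⊢
  intro r
  filter_upwards [hbot (r / p), self_mem_nhdsWithin] with y hyr hy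
  have hyr : h y < r / p := EReal.coe_lt_coe_iff.1 hyr
  have hle := integral_exp_neg_sub_sq_div_mul_comp_le hτ hh hh0 hy (hint y hy)
  refine EReal.coe_lt_coe_iff.2 ?_
  calc _ ≤ p * h y := by
        rw [mul_assoc]
        exact mul_le_mul_of_nonneg_left hle (by positivity)
    _ < p * (r / p) := mul_lt_mul_of_pos_left hyr hp
    _ = r := mul_div_cancel₀ r hp.ne'

end Limits

theorem stmt_4_general (Ut g : ℝ → ℝ) (C q M τ : ℝ) (hτ : 0 < τ)
    (hmono : AntitoneOn Ut (Ioi 0))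
    (hconv : ConvexOn ℝ (Ioi 0) Ut)
    (hbdd : ∀ y > (0 : ℝ), M ≤ Ut y)
    (hgrowth : ∀ y > (0 : ℝ), Ut y ≤ C * (1 + y ^ q))
    (hg : ∀ y > (0 : ℝ), HasDerivWithinAt Ut (g y) (Ioi y) y) :
    let v : ℝ → ℝ := fun y =>
      (2 * Real.sqrt (Real.pi * τ))⁻¹ *
        ∫ x : ℝ, Real.exp (-x ^ 2 / (4 * τ)) * Ut (y * Real.exp (x - τ))
    let v' : ℝ → ℝ := fun y =>
      (2 * Real.sqrt (Real.pi * τ))⁻¹ *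
        ∫ x : ℝ, Real.exp (-(x - 2 * τ) ^ 2 / (4 * τ)) * g (y * Real.exp (x - τ))
    (∀ y > (0 : ℝ), HasDerivAt v (v' y) y) ∧
    ∃ L : EReal, L ≤ 0 ∧
      Tendsto (fun y => (g y : EReal)) (nhdsWithin 0 (Ioi 0)) (nhds L) ∧
      Tendsto (fun y => (v' y : EReal)) (nhdsWithin 0 (Ioi 0)) (nhds L) := by
  intro v v'
  have hderiv (y : ℝ) (hy : 0 < y) :=
    hasDerivAt_integral_exp_neg_sq_div_mul_comp hτ hmono hconv hbdd hgrowth hg hy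
  have hgmono : MonotoneOn g (Ioi 0) := hconv.monotoneOn_of_hasDerivWithinAt_Ioi isOpen_Ioi hg
  have hg0 (z : ℝ) (hz : 0 < z) : g z ≤ 0 :=
    (hg z hz).nonpos_of_antitoneOn_Ioi (hmono.mono (Ioi_subset_Ioi hz.le))
  refine ⟨fun y hy => (hderiv y hy).2.const_mul _, ?_⟩
  obtain ⟨L, hLg, hgL⟩ := hgmono.exists_tendsto_nhdsGT_zero
  have hL0 : L ≤ 0 := (hLg 1 one_pos).trans (EReal.coe_nonpos.2 (hg0 1 one_pos))
  refine ⟨L, hL0, hgL, ?_⟩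
  induction L using EReal.rec with
  | bot =>
    exact tendsto_integral_exp_neg_sub_sq_div_mul_comp_bot hτ hgmono hg0
      (fun y hy => (hderiv y hy).1) hgL
  | coe l =>
    have hl (z : ℝ) (hz : 0 < z) : |g z| ≤ |l| :=
      abs_le_abs_of_nonpos (hg0 z hz) (EReal.coe_le_coe_iff.1 (hLg z hz))
    exact EReal.tendsto_coe.2
      (tendsto_integral_exp_neg_sub_sq_div_mul_comp hτ hgmono hl (EReal.tendsto_coe.1 hgL))
  | top => simp at hL0

/-- the Gaussian-smoothed dual value function
`v(y) = (2√(πτ))⁻¹ ∫ e^{-x²/(4τ)} Ũ(y e^{x-τ}) dx` is differentiable with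
`v'(y) = (2√(πτ))⁻¹ ∫ e^{-(x-2τ)²/(4τ)} D⁺Ũ(y e^{x-τ}) dx`, where `D⁺Ũ = g` is the
right derivative of the convex function `Ũ`; moreover `v'` and `D⁺Ũ` have the same
limit as `y → 0⁺` in `[-∞, 0]`. -/
theorem stmt_4 (Ut g : ℝ → ℝ) (C q M τ : ℝ) (hC : 0 < C) (hq : q < 0) (hτ : 0 < τ)
    (hmono : AntitoneOn Ut (Ioi 0))
    (hconv : ConvexOn ℝ (Ioi 0) Ut)
    (hbdd : ∀ y > (0 : ℝ), M ≤ Ut y)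
    (hgrowth : ∀ y > (0 : ℝ), Ut y ≤ C * (1 + y ^ q))
    (hg : ∀ y > (0 : ℝ), HasDerivWithinAt Ut (g y) (Ioi y) y) :
    let v : ℝ → ℝ := fun y =>
      (2 * Real.sqrt (Real.pi * τ))⁻¹ *
        ∫ x : ℝ, Real.exp (-x ^ 2 / (4 * τ)) * Ut (y * Real.exp (x - τ))
    let v' : ℝ → ℝ := fun y =>
      (2 * Real.sqrt (Real.pi * τ))⁻¹ *
        ∫ x : ℝ, Real.exp (-(x - 2 * τ) ^ 2 / (4 * τ)) * g (y * Real.exp (x - τ))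
    (∀ y > (0 : ℝ), HasDerivAt v (v' y) y) ∧
    ∃ L : EReal, L ≤ 0 ∧
      Tendsto (fun y => (g y : EReal)) (nhdsWithin 0 (Ioi 0)) (nhds L) ∧
      Tendsto (fun y => (v' y : EReal)) (nhdsWithin 0 (Ioi 0)) (nhds L) :=
  stmt_4_general Ut g C q M τ hτ hmono hconv hbdd hgrowth hg
end

section
/- Let N ≥ 1, let 0 = x₀ < x₁ < ⋯ < x_N < x_{N+1} = ∞, c₁ > ⋯ > c_N > c_{N+1} = 0 with c₀ = +∞, and d₁,…,d_{N+1} satisfy cᵢxᵢ + dᵢ = c_{i+1}xᵢ + d_{i+1} for i = 1,…,N. Let Ũ(y) = −xᵢ·y + c_{i+1}xᵢ + d_{i+1} for c_{i+1} ≤ y < cᵢ, i = 0,…,N, be the dual of the piecewise linear utility. Fix α > 0 and y > 0 and let Z be a standard normal random variable. Then E[Ũ(y e^{−α²/2} e^{−αZ})] = Σ_{i=0}^{N} Aᵢ(y), where Aᵢ(y) = −xᵢ·y·(Φ(c̄_{i+1}(y)+α) − Φ(c̄ᵢ(y)+α)) + (c_{i+1}xᵢ + d_{i+1})·(Φ(c̄_{i+1}(y))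 − Φ(c̄ᵢ(y))), with c̄ᵢ(y) = (ln y − ln cᵢ)/α − α/2 for i = 1,…,N, c̄₀(y) = −∞, c̄_{N+1}(y) = +∞, Φ the standard normal cumulative distribution function, and the conventions Φ(−∞) = 0, Φ(+∞) = 1. -/
/-!
The dual state `y e^{-α²/2} e^{-αz}` is decreasing in `z`, so for `c_{i+1} > 0` the event
`c_{i+1} ≤ Y < c_i` is the interval `c̄_i < z ≤ c̄_{i+1}`, on which `Ũ` is affine. Completing the
square, `φ(z) · y e^{-α²/2 - αz} = y φ(z + α)`, so against the standard normal density `φ` the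
linear part of `Ũ` integrates to an increment of `Φ(· + α)` and the constant part to an increment
of `Φ`.
-/

open Real Set Filter MeasureTheory

noncomputable def stdNormalCdf : ℝ → ℝ :=
  fun t => ∫ u in Iic t, Real.exp (-u ^ 2 / 2) / Real.sqrt (2 * Real.pi)

open ProbabilityTheory

section PiecewiseIntegral

variable {X E : Type*} [MeasurableSpace X] [NormedAddCommGroup E] [NormedSpace ℝ E]
  {μ : Measure X} {S : ℕ → Set X}

theorem integrableOn_and_setIntegral_eq_sum_sdiff {f : X → E} (hS0 : S 0 = ∅)
    (hmeas : ∀ i, MeasurableSet (S i)) (n : ℕ) (hS : ∀ i < n, S i ⊆ S (i + 1))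
    (hf : ∀ i < n, IntegrableOn f (S (i + 1) \ S i) μ) :
    IntegrableOn f (S n) μ ∧
      ∫ x in S n, f x ∂μ = ∑ i ∈ Finset.range n, ∫ x in S (i + 1) \ S i, f x ∂μ := by
  induction n with
  | zero => simp [hS0]
  | succ n ih =>
    obtain ⟨hint, hsum⟩ := ih (fun i hi => hS i (by omega)) (fun i hi => hf i (by omega))
    have hunion : S n ∪ S (n + 1) \ S n = S (n + 1) := union_sdiff_cancel (hS n n.lt_succ_self)
    have hlast := hf n n.lt_succ_self
    refine ⟨hunion ▸ hint.union hlast, ?_⟩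
    rw [← hunion, setIntegral_union disjoint_sdiff_right ((hmeas _).diff (hmeas _)) hint hlast,
      hsum, Finset.sum_range_succ]

theorem integral_eq_sum_setIntegral_sdiff_of_eqOn {f : X → E} {g : ℕ → X → E} {n : ℕ}
    (hS0 : S 0 = ∅) (hSn : S n = univ) (hmeas : ∀ i, MeasurableSet (S i))
    (hS : ∀ i < n, S i ⊆ S (i + 1)) (hg : ∀ i < n, IntegrableOn (g i) (S (i + 1) \ S i) μ)
    (hfg : ∀ i < n, EqOn f (g i) (S (i + 1) \ S i)) :
    ∫ x, f x ∂μ = ∑ i ∈ Finset.range n, ∫ x in S (i + 1) \ S i, g i x ∂μ := by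
  have hband : ∀ i, MeasurableSet (S (i + 1) \ S i) := fun i => (hmeas _).diff (hmeas _)
  rw [← setIntegral_univ, ← hSn, (integrableOn_and_setIntegral_eq_sum_sdiff hS0 hmeas n hS
    fun i hi => (hg i hi).congr_fun (hfg i hi).symm (hband i)).2]
  exact Finset.sum_congr rfl fun i hi =>
    setIntegral_congr_fun (hband i) (hfg i (Finset.mem_range.1 hi))

end PiecewiseIntegral

theorem setIntegral_sdiff_const_mul_add_const_mul {X : Type*} [MeasurableSpace X] {μ : Measure X}
    {s t : Set X} (ht : MeasurableSet t) (hts : t ⊆ s) {u v : X → ℝ} (hu : IntegrableOn u s μ)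
    (hv : IntegrableOn v s μ) (a b : ℝ) :
    ∫ x in s \ t, (a * u x + b * v x) ∂μ =
      a * ((∫ x in s, u x ∂μ) - ∫ x in t, u x ∂μ) +
        b * ((∫ x in s, v x ∂μ) - ∫ x in t, v x ∂μ) := by
  rw [integral_add ((hu.mono_set sdiff_subset).const_mul a)
    ((hv.mono_set sdiff_subset).const_mul b), integral_const_mul, integral_const_mul,
    setIntegral_sdiff ht hu hts, setIntegral_sdiff ht hv hts]

/-- `Iic (t i)` under the conventions `t 0 = -∞` and `t (N + 1) = +∞`. -/
def extendedIic (N : ℕ) (t : ℕ → ℝ) (i : ℕ) : Set ℝ :=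
  if i = 0 then ∅ else if i = N + 1 then univ else Iic (t i)

section extendedIic

variable {N : ℕ} {t : ℕ → ℝ}

theorem measurableSet_extendedIic (i : ℕ) : MeasurableSet (extendedIic N t i) := by
  unfold extendedIic
  split_ifs <;> simp

theorem extendedIic_subset_succ (ht : ∀ i, 1 ≤ i → i < N → t i ≤ t (i + 1)) {i : ℕ}
    (hi : i ≤ N) : extendedIic N t i ⊆ extendedIic N t (i + 1) := by
  rcases Nat.eq_zero_or_pos i with rfl | hi0
  · simp [extendedIic]
  rcases hi.eq_or_lt with rfl | hiN
  · simp [extendedIic]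
  simp only [extendedIic, if_neg (by omega : i ≠ 0), if_neg (by omega : i ≠ N + 1),
    if_neg (by omega : i + 1 ≠ N + 1), Nat.add_one_ne_zero, if_false]
  exact Iic_subset_Iic.2 (ht i hi0 hiN)

theorem setIntegral_extendedIic {μ : Measure ℝ} (f : ℝ → ℝ) (i : ℕ) :
    ∫ z in extendedIic N t i, f z ∂μ =
      if i = 0 then 0 else if i = N + 1 then ∫ z, f z ∂μ else ∫ z in Iic (t i), f z ∂μ := by
  unfold extendedIic
  split_ifs <;> simp

end extendedIic

theorem gaussianPDFReal_zero_one (z : ℝ) :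
    gaussianPDFReal 0 1 z = exp (-z ^ 2 / 2) / √(2 * π) := by
  simp [gaussianPDFReal, div_eq_inv_mul]

theorem setIntegral_Iic_gaussianPDFReal_neg (α t : ℝ) :
    ∫ z in Iic t, gaussianPDFReal (-α) 1 z = stdNormalCdf (t + α) := by
  have h := (measurePreserving_add_right volume α).setIntegral_preimage_emb
    (measurableEmbedding_addRight α) (gaussianPDFReal 0 1) (Iic (t + α))
  simp only [preimage_add_const_Iic, add_sub_cancel_right, gaussianPDFReal_add, zero_sub] at h
  rw [h]
  simp only [stdNormalCdf, gaussianPDFReal_zero_one]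

theorem setIntegral_extendedIic_gaussianPDFReal (N : ℕ) (t : ℕ → ℝ) (α : ℝ) (i : ℕ) :
    ∫ z in extendedIic N t i, gaussianPDFReal (-α) 1 z =
      if i = 0 then 0 else if i = N + 1 then 1 else stdNormalCdf (t i + α) := by
  rw [setIntegral_extendedIic, integral_gaussianPDFReal_eq_one _ one_ne_zero]
  simp only [setIntegral_Iic_gaussianPDFReal_neg]

theorem gaussianPDFReal_mul_exp (α y z : ℝ) :
    gaussianPDFReal 0 1 z * (y * exp (-α ^ 2 / 2) * exp (-α * z)) =
      y * gaussianPDFReal (-α) 1 z := by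
  have hsquare : exp (-z ^ 2 / 2) * exp (-α ^ 2 / 2) * exp (-α * z) = exp (-(z + α) ^ 2 / 2) := by
    rw [← exp_add, ← exp_add]
    ring_nf
  simp only [gaussianPDFReal, NNReal.coe_one, mul_one, sub_zero, sub_neg_eq_add]
  linear_combination (√(2 * π))⁻¹ * y * hsquare

theorem le_mul_exp_iff {α y c z : ℝ} (hα : 0 < α) (hy : 0 < y) (hc : 0 < c) :
    c ≤ y * exp (-α ^ 2 / 2) * exp (-α * z) ↔ z ≤ (log y - log c) / α - α / 2 := by
  have hexp : y * exp (-α ^ 2 / 2) * exp (-α * z) = exp (log y - α * (z + α / 2)) := by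
    rw [sub_eq_add_neg, exp_add, exp_log hy, mul_assoc, ← exp_add]
    ring_nf
  rw [hexp, ← log_le_iff_le_exp hc, le_sub_iff_add_le (b := α / 2), le_div_iff₀ hα]
  constructor <;> intro h <;> linarith

theorem pos_of_lt_of_succ_eq_zero {c : ℕ → ℝ} {N : ℕ}
    (hcmono : ∀ i, 1 ≤ i → i ≤ N → c (i + 1) < c i) (hcN : c (N + 1) = 0) {j : ℕ}
    (hj : 1 ≤ j) (hjN : j ≤ N) : 0 < c j := by
  have hlt : ∀ k, j ≤ k → k ≤ N → c (k + 1) < c j := by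
    intro k hjk
    induction k, hjk using Nat.le_induction with
    | base => exact hcmono j hj
    | succ k hjk ih =>
      intro hk
      exact (hcmono (k + 1) (by omega) hk).trans (ih (by omega))
  simpa [hcN] using hlt N hjN le_rfl

/-- The paper's `c̄_i(y)`. -/
noncomputable def cBar (c : ℕ → ℝ) (α y : ℝ) (i : ℕ) : ℝ := (log y - log (c i)) / α - α / 2

section DualUtility

variable {N : ℕ} {x c d : ℕ → ℝ} {Ut : ℝ → ℝ} {α y : ℝ}

theorem cBar_le_cBar_succ (hα : 0 ≤ α) (hc : ∀ i, 1 ≤ i → i ≤ N → 0 < c i)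
    (hcmono : ∀ i, 1 ≤ i → i ≤ N → c (i + 1) < c i) (i : ℕ) (hi : 1 ≤ i) (hiN : i < N) :
    cBar c α y i ≤ cBar c α y (i + 1) := by
  unfold cBar
  gcongr
  exacts [hc _ (by omega) hiN, (hcmono i hi hiN.le).le]

theorem mem_extendedIic_cBar_iff (hα : 0 < α) (hy : 0 < y) (hc : ∀ i, 1 ≤ i → i ≤ N → 0 < c i)
    (hcN : c (N + 1) = 0) {i : ℕ} (hi : 1 ≤ i) (hiN : i ≤ N + 1) (z : ℝ) :
    z ∈ extendedIic N (cBar c α y) i ↔ c i ≤ y * exp (-α ^ 2 / 2) * exp (-α * z) := by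
  rcases hiN.eq_or_lt with rfl | hiN
  · simp only [extendedIic, if_neg (by omega : N + 1 ≠ 0), if_true, mem_univ, hcN, true_iff]
    positivity
  · simp only [extendedIic, if_neg (by omega : i ≠ 0), if_neg hiN.ne, mem_Iic]
    exact (le_mul_exp_iff hα hy (hc i hi (by omega))).symm

theorem eqOn_sdiff_extendedIic_cBar (hα : 0 < α) (hy : 0 < y)
    (hc : ∀ i, 1 ≤ i → i ≤ N → 0 < c i) (hcN : c (N + 1) = 0)
    (hUt : ∀ i ≤ N, ∀ z : ℝ, c (i + 1) ≤ z → (i = 0 ∨ z < c i) →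
      Ut z = -(x i) * z + c (i + 1) * x i + d (i + 1)) {i : ℕ} (hi : i ≤ N) :
    EqOn (fun z => gaussianPDFReal 0 1 z * Ut (y * exp (-α ^ 2 / 2) * exp (-α * z)))
      (fun z => -(x i) * y * gaussianPDFReal (-α) 1 z +
        (c (i + 1) * x i + d (i + 1)) * gaussianPDFReal 0 1 z)
      (extendedIic N (cBar c α y) (i + 1) \ extendedIic N (cBar c α y) i) := by
  intro z ⟨hzi1, hzi⟩
  have hlo := (mem_extendedIic_cBar_iff hα hy hc hcN (by omega) (by omega) z).1 hzi1
  have hhi : i = 0 ∨ y * exp (-α ^ 2 / 2) * exp (-α * z) < c i := by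
    rcases Nat.eq_zero_or_pos i with h | h
    · exact .inl h
    · exact .inr (not_le.1 fun h' =>
        hzi ((mem_extendedIic_cBar_iff hα hy hc hcN h (by omega) z).2 h'))
  simp only [hUt i hi _ hlo hhi]
  linear_combination (-(x i)) * gaussianPDFReal_mul_exp α y z

end DualUtility

theorem stmt_9_general (N : ℕ) (x c d : ℕ → ℝ)
    (hcmono : ∀ i, 1 ≤ i → i ≤ N → c (i + 1) < c i)
    (hcN : c (N + 1) = 0)
    (Ut : ℝ → ℝ)
    (hUt : ∀ i ≤ N, ∀ z : ℝ, c (i + 1) ≤ z → (i = 0 ∨ z < c i) →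
      Ut z = -(x i) * z + c (i + 1) * x i + d (i + 1))
    (α y : ℝ) (hα : 0 < α) (hy : 0 < y) :
    let cb : ℕ → ℝ := fun i => (Real.log y - Real.log (c i)) / α - α / 2
    let PhiL : ℕ → ℝ := fun i =>
      if i = 0 then 0 else if i = N + 1 then 1 else stdNormalCdf (cb i)
    let PhiA : ℕ → ℝ := fun i =>
      if i = 0 then 0 else if i = N + 1 then 1 else stdNormalCdf (cb i + α)
    (∫ z : ℝ, (Real.exp (-z ^ 2 / 2) / Real.sqrt (2 * Real.pi)) *
        Ut (y * Real.exp (-α ^ 2 / 2) * Real.exp (-α * z))) =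
      ∑ i ∈ Finset.range (N + 1),
        (-(x i) * y * (PhiA (i + 1) - PhiA i) +
          (c (i + 1) * x i + d (i + 1)) * (PhiL (i + 1) - PhiL i)) := by
  intro cb PhiL PhiA
  set S := extendedIic N (cBar c α y)
  have hc : ∀ i, 1 ≤ i → i ≤ N → 0 < c i := fun i => pos_of_lt_of_succ_eq_zero hcmono hcN
  have hS : ∀ i < N + 1, S i ⊆ S (i + 1) := fun i hi =>
    extendedIic_subset_succ (cBar_le_cBar_succ hα.le hc hcmono) (by omega)
  have hPhiL : ∀ i, ∫ z in S i, gaussianPDFReal 0 1 z = PhiL i := fun i => by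
    simpa [PhiL, cb, cBar] using setIntegral_extendedIic_gaussianPDFReal N (cBar c α y) 0 i
  have hPhiA : ∀ i, ∫ z in S i, gaussianPDFReal (-α) 1 z = PhiA i :=
    setIntegral_extendedIic_gaussianPDFReal N (cBar c α y) α
  calc _ = ∫ z, gaussianPDFReal 0 1 z * Ut (y * exp (-α ^ 2 / 2) * exp (-α * z)) := by
        simp only [gaussianPDFReal_zero_one]
    _ = ∑ i ∈ Finset.range (N + 1), ∫ z in S (i + 1) \ S i,
          (-(x i) * y * gaussianPDFReal (-α) 1 z +
            (c (i + 1) * x i + d (i + 1)) * gaussianPDFReal 0 1 z) :=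
        integral_eq_sum_setIntegral_sdiff_of_eqOn (by simp [S, extendedIic])
          (by simp [S, extendedIic]) measurableSet_extendedIic hS
          (fun i _ => (((integrable_gaussianPDFReal _ _).const_mul _).add
            ((integrable_gaussianPDFReal _ _).const_mul _)).integrableOn)
          fun i hi => eqOn_sdiff_extendedIic_cBar hα hy hc hcN hUt (by omega)
    _ = _ := Finset.sum_congr rfl fun i hi => by
        rw [setIntegral_sdiff_const_mul_add_const_mul (measurableSet_extendedIic _)
          (hS i (Finset.mem_range.1 hi)) (integrable_gaussianPDFReal _ _).integrableOn
          (integrable_gaussianPDFReal _ _).integrableOn, hPhiL, hPhiL, hPhiA, hPhiA]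

/-- the expectation of the piecewise-linear dual utility `Ũ` of the
lognormal variable `y e^{-α²/2} e^{-αZ}` (`Z` standard normal) equals
`Σ_{i=0}^N A_i(y)` with
`A_i(y) = -x_i y (Φ(c̄_{i+1}(y)+α) - Φ(c̄_i(y)+α)) + (c_{i+1}x_i + d_{i+1})(Φ(c̄_{i+1}(y)) - Φ(c̄_i(y)))`,
`c̄_i(y) = (ln y - ln c_i)/α - α/2`, with conventions `Φ(c̄_0) = 0`, `Φ(c̄_{N+1}) = 1`
(and similarly for the shifted values). The expectation is written as an integral
against the standard normal density. -/
theorem stmt_9 (N : ℕ) (hN : 1 ≤ N) (x c d : ℕ → ℝ)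
    (hx0 : x 0 = 0)
    (hxmono : ∀ i < N, x i < x (i + 1))
    (hcmono : ∀ i, 1 ≤ i → i ≤ N → c (i + 1) < c i)
    (hcN : c (N + 1) = 0)
    (hcont : ∀ i, 1 ≤ i → i ≤ N → c i * x i + d i = c (i + 1) * x i + d (i + 1))
    (Ut : ℝ → ℝ)
    (hUt : ∀ i ≤ N, ∀ z : ℝ, c (i + 1) ≤ z → (i = 0 ∨ z < c i) →
      Ut z = -(x i) * z + c (i + 1) * x i + d (i + 1))
    (α y : ℝ) (hα : 0 < α) (hy : 0 < y) :
    let cb : ℕ → ℝ := fun i => (Real.log y - Real.log (c i)) / α - α / 2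
    let PhiL : ℕ → ℝ := fun i =>
      if i = 0 then 0 else if i = N + 1 then 1 else stdNormalCdf (cb i)
    let PhiA : ℕ → ℝ := fun i =>
      if i = 0 then 0 else if i = N + 1 then 1 else stdNormalCdf (cb i + α)
    (∫ z : ℝ, (Real.exp (-z ^ 2 / 2) / Real.sqrt (2 * Real.pi)) *
        Ut (y * Real.exp (-α ^ 2 / 2) * Real.exp (-α * z))) =
      ∑ i ∈ Finset.range (N + 1),
        (-(x i) * y * (PhiA (i + 1) - PhiA i) +
          (c (i + 1) * x i + d (i + 1)) * (PhiL (i + 1) - PhiL i)) :=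
  stmt_9_general N x c d hcmono hcN Ut hUt α y hα hy
end

section
/- Let H > 0 and α > 0, and define v(y) = H·Φ(−(ln y)/α + α/2) − H·y·Φ(−(ln y)/α − α/2) for y > 0, where Φ is the standard normal cumulative distribution function. Then for every z ∈ ℝ, setting x = H·Φ(z) and y* = e^{−αz − α²/2}, one has v'(y*) = −x, the infimum inf_{y > 0}(v(y) + x·y) is attained at y = y*, and v(y*) + x·y* = H·Φ(z + α). -/
/-!
Since `Φ' = φ` and `φ(b + α) = e^{-αb - α²/2} φ(b)`, the two density terms in `v'` cancel and
`v'(y) = -H Φ(d(y))` with `d(y) = -(ln y)/α - α/2` decreasing in `y`. So `y ↦ v(y) + H Φ(z) y` has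
derivative `H (Φ(z) - Φ(d(y)))`, which changes sign from `-` to `+` at the point `y*` where
`d(y*) = z`; there the value is `H Φ(z + α) - H y* Φ(z) + H Φ(z) y* = H Φ(z + α)`.
-/

open Real Set Filter MeasureTheory

noncomputable def stdNormalPdf (t : ℝ) : ℝ := exp (-t ^ 2 / 2) / √(2 * π)

lemma continuous_stdNormalPdf : Continuous stdNormalPdf := by
  unfold stdNormalPdf
  fun_prop

lemma integrable_stdNormalPdf : Integrable stdNormalPdf := by
  refine ((integrable_exp_neg_mul_sq (b := 1 / 2) (by norm_num)).div_const √(2 * π)).congr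
    (Eventually.of_forall fun t => ?_)
  simp only [stdNormalPdf]
  ring_nf

lemma hasDerivAt_stdNormalCdf (t : ℝ) : HasDerivAt stdNormalCdf (stdNormalPdf t) t := by
  have hcdf : (fun x => stdNormalCdf 0 + ∫ u in (0 : ℝ)..x, stdNormalPdf u) = stdNormalCdf := by
    funext x
    have := intervalIntegral.integral_Iic_sub_Iic integrable_stdNormalPdf.integrableOn
      integrable_stdNormalPdf.integrableOn (a := 0) (b := x)
    simp only [stdNormalCdf, stdNormalPdf] at this ⊢
    linarith
  rw [← hcdf]
  exact (intervalIntegral.integral_hasDerivAt_right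
    (continuous_stdNormalPdf.intervalIntegrable _ _)
    (continuous_stdNormalPdf.stronglyMeasurableAtFilter _ _)
    continuous_stdNormalPdf.continuousAt).const_add _

lemma monotone_stdNormalCdf : Monotone stdNormalCdf :=
  monotone_of_hasDerivAt_nonneg hasDerivAt_stdNormalCdf fun t => by
    unfold stdNormalPdf
    positivity

lemma stdNormalPdf_add (b α : ℝ) :
    stdNormalPdf (b + α) = exp (-α * b - α ^ 2 / 2) * stdNormalPdf b := by
  simp only [stdNormalPdf, mul_div_assoc', ← exp_add]
  ring_nf

noncomputable def dualValue (H α y : ℝ) : ℝ :=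
  H * stdNormalCdf (-(log y) / α + α / 2) - H * y * stdNormalCdf (-(log y) / α - α / 2)

section DualValue

variable (H : ℝ) {α : ℝ}

lemma hasDerivAt_dualValue (hα : α ≠ 0) {y : ℝ} (hy : 0 < y) :
    HasDerivAt (dualValue H α) (-(H * stdNormalCdf (-(log y) / α - α / 2))) y := by
  have hd : HasDerivAt (fun y => -(log y) / α) (-y⁻¹ / α) y :=
    (hasDerivAt_log hy.ne').neg.div_const α
  have hΦ₁ := (hasDerivAt_stdNormalCdf _).comp y (hd.add_const (α / 2))
  have hΦ₂ := (hasDerivAt_stdNormalCdf _).comp y (hd.sub_const (α / 2))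
  have hv := (hΦ₁.const_mul H).sub (((hasDerivAt_id y).const_mul H).mul hΦ₂)
  have hshift : stdNormalPdf (-(log y) / α + α / 2) = y * stdNormalPdf (-(log y) / α - α / 2) := by
    rw [show -(log y) / α + α / 2 = (-(log y) / α - α / 2) + α by ring, stdNormalPdf_add,
      show -α * (-(log y) / α - α / 2) - α ^ 2 / 2 = log y by field_simp; ring, exp_log hy]
  refine hv.congr_deriv ?_
  simp only [Function.comp_def, id, mul_one, hshift]
  field_simp
  ring

lemma neg_log_exp_div_sub (hα : α ≠ 0) (z : ℝ) :
    -log (exp (-α * z - α ^ 2 / 2)) / α - α / 2 = z := by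
  rw [log_exp]
  field_simp
  ring

lemma neg_log_exp_div_add (hα : α ≠ 0) (z : ℝ) :
    -log (exp (-α * z - α ^ 2 / 2)) / α + α / 2 = z + α := by
  linarith [neg_log_exp_div_sub hα z]

lemma dualValue_exp_add_mul (hα : α ≠ 0) (z : ℝ) :
    dualValue H α (exp (-α * z - α ^ 2 / 2)) +
        H * stdNormalCdf z * exp (-α * z - α ^ 2 / 2) = H * stdNormalCdf (z + α) := by
  simp only [dualValue, neg_log_exp_div_sub hα, neg_log_exp_div_add hα]
  ring

lemma isMinOn_dualValue_add_mul (hH : 0 ≤ H) (hα : 0 < α) (z : ℝ) :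
    IsMinOn (fun y => dualValue H α y + H * stdNormalCdf z * y) (Ioi 0)
      (exp (-α * z - α ^ 2 / 2)) := by
  set y₀ := exp (-α * z - α ^ 2 / 2)
  have hderiv : ∀ y, 0 < y → HasDerivAt (fun y => dualValue H α y + H * stdNormalCdf z * y)
      (H * (stdNormalCdf z - stdNormalCdf (-(log y) / α - α / 2))) y := fun y hy =>
    ((hasDerivAt_dualValue H hα.ne' hy).add ((hasDerivAt_id y).const_mul _)).congr_deriv
      (by ring)
  have hdiff : DifferentiableOn ℝ (fun y => dualValue H α y + H * stdNormalCdf z * y) (Ioi 0) :=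
    fun y hy => (hderiv y hy).differentiableAt.differentiableWithinAt
  have hy₀ : 0 < y₀ := exp_pos _
  have hcmp : ∀ {y y'}, 0 < y → y ≤ y' →
      -(log y') / α - α / 2 ≤ -(log y) / α - α / 2 := fun hy hyy' => by gcongr
  refine isMinOn_Ioi_of_deriv (hderiv y₀ hy₀).continuousAt
    (hdiff.mono fun y hy => hy.1) (hdiff.mono fun y hy => hy₀.trans hy) ?_ ?_
  · intro y ⟨hy, hyy₀⟩
    rw [(hderiv y hy).deriv]
    refine mul_nonpos_of_nonneg_of_nonpos hH (sub_nonpos.2 (monotone_stdNormalCdf ?_))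
    simpa only [y₀, neg_log_exp_div_sub hα.ne'] using hcmp hy hyy₀.le
  · intro y (hy₀y : y₀ < y)
    rw [(hderiv y (hy₀.trans hy₀y)).deriv]
    refine mul_nonneg hH (sub_nonneg.2 (monotone_stdNormalCdf ?_))
    simpa only [y₀, neg_log_exp_div_sub hα.ne'] using hcmp hy₀ hy₀y.le

end DualValue

/-- for the dual value function
`v(y) = H Φ(-(ln y)/α + α/2) - H y Φ(-(ln y)/α - α/2)` of the capped linear utility,
for every `z ∈ ℝ`, setting `x = H Φ(z)` and `y* = e^{-αz - α²/2}`, one has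
`v'(y*) = -x`, the infimum of `y ↦ v(y) + x y` over `(0,∞)` is attained at `y*`,
and `v(y*) + x y* = H Φ(z + α)` (i.e. `u(H Φ(z)) = H Φ(z + α)`). -/
theorem stmt_12 (H α : ℝ) (hH : 0 < H) (hα : 0 < α) :
    let v : ℝ → ℝ := fun y =>
      H * stdNormalCdf (-(Real.log y) / α + α / 2) -
        H * y * stdNormalCdf (-(Real.log y) / α - α / 2)
    ∀ z : ℝ,
      HasDerivAt v (-(H * stdNormalCdf z)) (Real.exp (-α * z - α ^ 2 / 2)) ∧
      IsLeast ((fun y => v y + (H * stdNormalCdf z) * y) '' Ioi 0)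
        (v (Real.exp (-α * z - α ^ 2 / 2)) +
          (H * stdNormalCdf z) * Real.exp (-α * z - α ^ 2 / 2)) ∧
      v (Real.exp (-α * z - α ^ 2 / 2)) +
          (H * stdNormalCdf z) * Real.exp (-α * z - α ^ 2 / 2) =
        H * stdNormalCdf (z + α) := by
  intro v z
  refine ⟨?_, ⟨mem_image_of_mem _ (exp_pos _), ?_⟩, dualValue_exp_add_mul H hα.ne' z⟩
  · have := hasDerivAt_dualValue H hα.ne' (exp_pos (-α * z - α ^ 2 / 2))
    rwa [neg_log_exp_div_sub hα.ne'] at this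
  · rintro _ ⟨y, hy, rfl⟩
    exact isMinOn_dualValue_add_mul H hH.le hα z hy
end

section
/- Let H > 0 and 0 < p < 1, and define U_p : [0,∞) → ℝ by U_p(x) = x for 0 ≤ x < H and U_p(x) = H(x/H)^p for x ≥ H. Then the dual function Ũ_p(y) = sup_{x ≥ 0}(U_p(x) − x·y) satisfies: Ũ_p(y) = H·((1−p)/p)·p^{1/(1−p)}·y^{p/(p−1)} for 0 < y ≤ p, with the supremum attained at x* = H(y/p)^{1/(p−1)}; Ũ_p(y) = H(1 − y) for p < y ≤ 1, with the supremum attained at x* = H; and Ũ_p(y) = 0 for y ≥ 1, with the supremum attained at x* = 0. -/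
/-!
On `[0, ∞)` the utility `U = linPowUtility H p` is `t ↦ min t (H (t/H)^p)`, hence concave, and
`t ↦ U t - t y` is maximal at `x*` as soon as `y` is a supergradient of `U` there:
`U t ≤ U x* + y (t - x*)` for all `t ≥ 0`. For `y ≥ 1` take `x* = 0`, since `U t ≤ t`; for
`p ≤ y ≤ 1` take the kink `x* = H`, whose one-sided slopes are `1` and `p`; for `0 < y ≤ p` take
the point where the power branch has slope `y`, and use the tangent line inequality for `s ^ p`.
-/

open Real Set

lemma isGreatest_image_sub_mul_of_le_add_mul {f : ℝ → ℝ} {S : Set ℝ} {a y : ℝ} (ha : a ∈ S)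
    (hf : ∀ t ∈ S, f t ≤ f a + y * (t - a)) :
    IsGreatest ((fun t => f t - t * y) '' S) (f a - a * y) :=
  ⟨⟨a, ha, rfl⟩, by rintro _ ⟨t, ht, rfl⟩; linarith [hf t ht]⟩

lemma rpow_le_rpow_add_mul_sub {p s w : ℝ} (hp0 : 0 ≤ p) (hp1 : p ≤ 1) (hs : 0 ≤ s)
    (hw : 0 < w) : s ^ p ≤ w ^ p + p * w ^ (p - 1) * (s - w) := by
  have bernoulli : (s / w) ^ p ≤ 1 + p * (s / w - 1) := by
    simpa using rpow_one_add_le_one_add_mul_self (s := s / w - 1)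
      (by linarith [div_nonneg hs hw.le]) hp0 hp1
  rw [div_rpow hs hw.le, div_le_iff₀ (rpow_pos_of_pos hw p)] at bernoulli
  calc s ^ p ≤ (1 + p * (s / w - 1)) * w ^ p := bernoulli
    _ = w ^ p + p * (w ^ p / w) * (s - w) := by field_simp
    _ = w ^ p + p * w ^ (p - 1) * (s - w) := by rw [rpow_sub_one hw.ne']

lemma one_le_div_rpow_one_div_sub_one {p y : ℝ} (hp0 : 0 < p) (hp1 : p ≤ 1) (hy : 0 < y)
    (hyp : y ≤ p) : 1 ≤ (y / p) ^ (1 / (p - 1)) :=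
  one_le_rpow_of_pos_of_le_one_of_nonpos (by positivity) ((div_le_one hp0).mpr hyp)
    (one_div_nonpos.mpr (by linarith))

lemma div_rpow_one_div_sub_one_rpow_sub_one {p y : ℝ} (hp0 : 0 ≤ p) (hp1 : p ≠ 1) (hy : 0 ≤ y) :
    ((y / p) ^ (1 / (p - 1))) ^ (p - 1) = y / p := by
  rw [one_div, rpow_inv_rpow (by positivity) (sub_ne_zero.mpr hp1)]

noncomputable def linPowUtility (H p t : ℝ) : ℝ :=
  if t < H then t else H * (t / H) ^ p

section linPowUtility

variable {H p t y : ℝ}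

lemma linPowUtility_of_lt (h : t < H) : linPowUtility H p t = t := if_pos h

lemma linPowUtility_of_le (h : H ≤ t) : linPowUtility H p t = H * (t / H) ^ p :=
  if_neg h.not_gt

lemma linPowUtility_self (hH : 0 < H) : linPowUtility H p H = H := by
  rw [linPowUtility_of_le le_rfl, div_self hH.ne', one_rpow, mul_one]

lemma linPowUtility_le_self (hH : 0 < H) (hp1 : p ≤ 1) (t : ℝ) : linPowUtility H p t ≤ t := by
  rcases lt_or_ge t H with h | h
  · rw [linPowUtility_of_lt h]
  · rw [linPowUtility_of_le h]
    have := rpow_le_self_of_one_le ((one_le_div hH).mpr h) hp1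
    calc H * (t / H) ^ p ≤ H * (t / H) := by gcongr
      _ = t := by field_simp

lemma linPowUtility_le_mul_rpow (hH : 0 < H) (hp1 : p ≤ 1) (ht : 0 ≤ t) :
    linPowUtility H p t ≤ H * (t / H) ^ p := by
  rcases lt_or_ge t H with h | h
  · rw [linPowUtility_of_lt h]
    have := self_le_rpow_of_le_one (by positivity) ((div_le_one hH).mpr h.le) hp1
    calc t = H * (t / H) := by field_simp
      _ ≤ H * (t / H) ^ p := by gcongr
  · rw [linPowUtility_of_le h]

lemma linPowUtility_mul_of_one_le {w : ℝ} (hH : 0 < H) (hw : 1 ≤ w) :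
    linPowUtility H p (H * w) = H * w ^ p := by
  rw [linPowUtility_of_le (le_mul_of_one_le_right hH.le hw), mul_div_cancel_left₀ _ hH.ne']

lemma linPowUtility_le_add_mul_of_one_le (hH : 0 < H) (hp1 : p ≤ 1) (hy : 1 ≤ y)
    (ht : 0 ≤ t) : linPowUtility H p t ≤ linPowUtility H p 0 + y * (t - 0) := by
  rw [linPowUtility_of_lt hH]
  nlinarith [linPowUtility_le_self hH hp1 t]

lemma linPowUtility_le_add_mul_of_mem_Icc (hH : 0 < H) (hp0 : 0 ≤ p) (hp1 : p ≤ 1)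
    (hy : y ∈ Icc p 1) (ht : 0 ≤ t) :
    linPowUtility H p t ≤ linPowUtility H p H + y * (t - H) := by
  rw [linPowUtility_self hH]
  rcases lt_or_ge t H with h | h
  · rw [linPowUtility_of_lt h]
    nlinarith [hy.2]
  · have := rpow_le_rpow_add_mul_sub hp0 hp1 (div_nonneg ht hH.le) one_pos
    rw [one_rpow, one_rpow, mul_one] at this
    calc linPowUtility H p t ≤ H * (t / H) ^ p := linPowUtility_le_mul_rpow hH hp1 ht
      _ ≤ H * (1 + p * (t / H - 1)) := by gcongr
      _ = H + p * (t - H) := by field_simp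
      _ ≤ H + y * (t - H) := by nlinarith [hy.1]

lemma linPowUtility_le_add_mul_of_le (hH : 0 < H) (hp0 : 0 < p) (hp1 : p < 1)
    (hy : 0 < y) (hyp : y ≤ p) (ht : 0 ≤ t) :
    linPowUtility H p t ≤ linPowUtility H p (H * (y / p) ^ (1 / (p - 1))) +
      y * (t - H * (y / p) ^ (1 / (p - 1))) := by
  set w := (y / p) ^ (1 / (p - 1))
  have hw : 1 ≤ w := one_le_div_rpow_one_div_sub_one hp0 hp1.le hy hyp
  have slope : p * w ^ (p - 1) = y := by
    rw [div_rpow_one_div_sub_one_rpow_sub_one hp0.le hp1.ne hy.le]; field_simp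
  have := rpow_le_rpow_add_mul_sub hp0.le hp1.le (div_nonneg ht hH.le) (zero_lt_one.trans_le hw)
  rw [linPowUtility_mul_of_one_le hH hw, ← slope]
  calc linPowUtility H p t ≤ H * (t / H) ^ p := linPowUtility_le_mul_rpow hH hp1.le ht
    _ ≤ H * (w ^ p + p * w ^ (p - 1) * (t / H - w)) := by gcongr
    _ = H * w ^ p + p * w ^ (p - 1) * (t - H * w) := by field_simp

lemma linPowUtility_sub_mul_of_le (hH : 0 < H) (hp0 : 0 < p) (hp1 : p < 1)
    (hy : 0 < y) (hyp : y ≤ p) :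
    linPowUtility H p (H * (y / p) ^ (1 / (p - 1))) - H * (y / p) ^ (1 / (p - 1)) * y =
      H * ((1 - p) / p) * p ^ (1 / (1 - p)) * y ^ (p / (p - 1)) := by
  set w := (y / p) ^ (1 / (p - 1))
  have hw : 1 ≤ w := one_le_div_rpow_one_div_sub_one hp0 hp1.le hy hyp
  have hwp : w ^ p = w * (y / p) := by
    rw [← div_rpow_one_div_sub_one_rpow_sub_one hp0.le hp1.ne hy.le,
      ← rpow_one_add' (by positivity) (by simpa using hp0.ne'), add_sub_cancel]
  have hwy : w * y = p ^ (1 / (1 - p)) * y ^ (p / (p - 1)) := by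
    have hp : 1 / (1 - p) = -(1 / (p - 1)) := by rw [← one_div_neg_eq_neg_one_div, neg_sub]
    have hq : p / (p - 1) = 1 / (p - 1) + 1 := by field_simp [sub_ne_zero.mpr hp1.ne]; ring
    rw [show w = (y / p) ^ (1 / (p - 1)) from rfl, div_rpow hy.le hp0.le, hp, rpow_neg hp0.le, hq,
      rpow_add_one hy.ne']
    ring
  rw [linPowUtility_mul_of_one_le hH hw, hwp]
  linear_combination (norm := (field_simp; ring)) (H * (1 - p) / p) * hwy

end linPowUtility

/-- the dual function `Ũ_p(y) = sup_{x ≥ 0}(U_p(x) - x y)` of the utility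
`U_p(x) = x` for `0 ≤ x < H` and `U_p(x) = H (x/H)^p` for `x ≥ H`, with the supremum
attained at `x* = H (y/p)^{1/(p-1)}` when `0 < y ≤ p`, at `x* = H` when `p < y ≤ 1`,
and at `x* = 0` when `y ≥ 1`. -/
theorem stmt_15 (H p : ℝ) (hH : 0 < H) (hp0 : 0 < p) (hp1 : p < 1) :
    let Up : ℝ → ℝ := fun t => if t < H then t else H * (t / H) ^ p
    ∀ y : ℝ,
      (0 < y → y ≤ p →
        IsGreatest ((fun t => Up t - t * y) '' Ici 0)
          (H * ((1 - p) / p) * p ^ (1 / (1 - p)) * y ^ (p / (p - 1))) ∧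
        Up (H * (y / p) ^ (1 / (p - 1))) - (H * (y / p) ^ (1 / (p - 1))) * y =
          H * ((1 - p) / p) * p ^ (1 / (1 - p)) * y ^ (p / (p - 1))) ∧
      (p < y → y ≤ 1 →
        IsGreatest ((fun t => Up t - t * y) '' Ici 0) (H * (1 - y)) ∧
        Up H - H * y = H * (1 - y)) ∧
      (1 ≤ y →
        IsGreatest ((fun t => Up t - t * y) '' Ici 0) 0 ∧
        Up 0 - 0 * y = 0) := by
  intro Up y
  rw [show Up = linPowUtility H p from rfl]
  refine ⟨fun hy hyp => ?_, fun hy hy1 => ?_, fun hy => ?_⟩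
  · have hval := linPowUtility_sub_mul_of_le hH hp0 hp1 hy hyp
    have h := isGreatest_image_sub_mul_of_le_add_mul (mem_Ici.mpr (by positivity)) fun t ht =>
      linPowUtility_le_add_mul_of_le hH hp0 hp1 hy hyp ht
    rw [hval] at h
    exact ⟨h, hval⟩
  · have hval : linPowUtility H p H - H * y = H * (1 - y) := by
      rw [linPowUtility_self hH]; ring
    have h := isGreatest_image_sub_mul_of_le_add_mul (mem_Ici.mpr hH.le) fun t ht =>
      linPowUtility_le_add_mul_of_mem_Icc hH hp0.le hp1.le ⟨hy.le, hy1⟩ ht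
    rw [hval] at h
    exact ⟨h, hval⟩
  · have hval : linPowUtility H p 0 - 0 * y = 0 := by
      rw [linPowUtility_of_lt hH]; ring
    have h := isGreatest_image_sub_mul_of_le_add_mul self_mem_Ici fun t ht =>
      linPowUtility_le_add_mul_of_one_le (y := y) hH hp1.le hy ht
    rw [hval] at h
    exact ⟨h, hval⟩
end

section
/- Let a > 0, α > 0 and k be real with k + α < 0, and let φ : ℝ → ℝ be continuous with lim_{x→∞} e^{αx} φ(x) = 0 and lim_{x→−∞} φ(x)/e^{kx} = 1. For τ > 0 and x ∈ ℝ define w(τ,x) = (2√π)^{-1} ∫_{-∞}^{∞} e^{-η²/4} φ(x + a√τ·η) dη. Then for any 0 < τ₀ < τ₁, e^{αx} w(τ,x) → 0 as x → +∞, uniformly for τ ∈ [τ₀, τ₁]. -/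
/-!
Write `g y = e^{αy} φ(y)` and `s = a√τ`, so that `e^{αx} φ(x + sη) = e^{-αsη} g(x + sη)`.
Given `ε`, choose `R` with `|g| ≤ ε` on `[R, ∞)`; by continuity and the two limits,
`|g y| ≤ M (1 + e^{(k+α)y})` everywhere, hence `|g y| ≤ ε + M e^{R-y} + M e^{(k+α)y}` for all `y`.
Each term is an exponential in `η` after the substitution `y = x + sη`, and the Gaussian average of
`e^{bη}` is exactly `e^{b²}`. This gives
`|e^{αx} w(τ,x)| ≤ C (ε + M e^{R-x} + M e^{(k+α)x})` with `C` depending only on a bound for `|s|`,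
and the last two terms vanish as `x → ∞` because `k + α < 0`.
-/

open Real Set Filter MeasureTheory Topology

/-- The average against the density `e^{-η²/4} / (2√π)` of `N(0, 2)`; the function `w` of the
theorem is `w τ x = gaussianAverage (fun η => φ (x + a * √τ * η))`. -/
noncomputable def gaussianAverage (f : ℝ → ℝ) : ℝ :=
  (2 * √π)⁻¹ * ∫ η, exp (-η ^ 2 / 4) * f η

lemma exp_neg_sq_div_four_mul_exp (b η : ℝ) :
    exp (-η ^ 2 / 4) * exp (b * η) = exp (b ^ 2) * exp (-(1 / 4) * (η - 2 * b) ^ 2) := by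
  rw [← exp_add, ← exp_add]
  ring_nf

lemma integrable_exp_neg_sq_div_four_mul_exp (b : ℝ) :
    Integrable fun η => exp (-η ^ 2 / 4) * exp (b * η) := by
  simp_rw [exp_neg_sq_div_four_mul_exp b]
  exact ((integrable_exp_neg_mul_sq (by norm_num)).comp_sub_right (2 * b)).const_mul _

lemma integral_exp_neg_sq_div_four_mul_exp (b : ℝ) :
    ∫ η, exp (-η ^ 2 / 4) * exp (b * η) = 2 * √π * exp (b ^ 2) := by
  simp_rw [exp_neg_sq_div_four_mul_exp b]
  rw [integral_const_mul, integral_sub_right_eq_self (fun η => exp (-(1 / 4) * η ^ 2)),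
    integral_gaussian, div_div_eq_mul_div, div_one, sqrt_mul' _ (by norm_num),
    show (4 : ℝ) = 2 ^ 2 by norm_num, sqrt_sq (by norm_num)]
  ring

lemma abs_gaussianAverage_le_sum {ι : Type*} (s : Finset ι) (c b : ι → ℝ) {f : ℝ → ℝ}
    (hf : ∀ η, |f η| ≤ ∑ i ∈ s, c i * exp (b i * η)) :
    |gaussianAverage f| ≤ ∑ i ∈ s, c i * exp (b i ^ 2) := by
  have hint : ∀ i ∈ s, Integrable fun η => c i * (exp (-η ^ 2 / 4) * exp (b i * η)) :=
    fun i _ => (integrable_exp_neg_sq_div_four_mul_exp (b i)).const_mul (c i)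
  have hπ : 0 < 2 * √π := by positivity
  have hbound : |∫ η, exp (-η ^ 2 / 4) * f η|
      ≤ ∫ η, ∑ i ∈ s, c i * (exp (-η ^ 2 / 4) * exp (b i * η)) := by
    refine norm_integral_le_of_norm_le (f := fun η => exp (-η ^ 2 / 4) * f η)
      (integrable_finsetSum s hint) (ae_of_all _ fun η => ?_)
    rw [norm_mul, norm_of_nonneg (exp_pos _).le, Real.norm_eq_abs]
    simp_rw [mul_left_comm (c _) (exp (-η ^ 2 / 4)), ← Finset.mul_sum]
    exact mul_le_mul_of_nonneg_left (hf η) (exp_pos _).le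
  rw [integral_finsetSum s hint] at hbound
  simp_rw [integral_const_mul, integral_exp_neg_sq_div_four_mul_exp] at hbound
  rw [gaussianAverage, abs_mul, abs_of_pos (inv_pos.2 hπ), inv_mul_le_iff₀ hπ, Finset.mul_sum]
  exact hbound.trans_eq (Finset.sum_congr rfl fun i _ => by ring)

lemma exists_abs_le_mul_of_tendsto_div {f g : ℝ → ℝ} (hf : Continuous f) (hg : Continuous g)
    (hg_pos : ∀ y, 0 < g y) {l l' : ℝ} (htop : Tendsto (fun y => f y / g y) atTop (𝓝 l))
    (hbot : Tendsto (fun y => f y / g y) atBot (𝓝 l')) : ∃ M, 0 ≤ M ∧ ∀ y, |f y| ≤ M * g y := by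
  have hbdd := (hf.div hg fun y => (hg_pos y).ne').isBounded_range_iff_isBigO_atTop_atBot.2
    ⟨htop.isBigO_one ℝ, hbot.isBigO_one ℝ⟩
  obtain ⟨M, hM⟩ := isBounded_iff_forall_norm_le.1 hbdd
  refine ⟨M, (norm_nonneg _).trans (hM _ (mem_range_self 0)), fun y => ?_⟩
  have hy := hM _ (mem_range_self y)
  rwa [Pi.div_apply, norm_div, Real.norm_eq_abs, Real.norm_eq_abs, abs_of_pos (hg_pos y),
    div_le_iff₀ (hg_pos y)] at hy

lemma exists_abs_exp_mul_le {α k : ℝ} (hkα : k + α < 0) {φ : ℝ → ℝ} (hφ : Continuous φ)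
    (htop : Tendsto (fun x => exp (α * x) * φ x) atTop (𝓝 0))
    (hbot : Tendsto (fun x => φ x / exp (k * x)) atBot (𝓝 1)) :
    ∃ M, 0 ≤ M ∧ ∀ y, |exp (α * y) * φ y| ≤ M * (1 + exp ((k + α) * y)) := by
  have hlin : Tendsto (fun y => (k + α) * y) atTop atBot :=
    tendsto_id.const_mul_atTop_of_neg hkα
  have hlin' : Tendsto (fun y => -(k + α) * y) atBot atBot :=
    tendsto_id.const_mul_atBot (neg_pos.2 hkα)
  refine exists_abs_le_mul_of_tendsto_div (by fun_prop) (by fun_prop) (fun y => by positivity)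
    (l := 0 / (1 + 0)) (l' := 1 / (0 + 1)) ?_ ?_
  · exact htop.div (tendsto_const_nhds.add (tendsto_exp_atBot.comp hlin)) (by norm_num)
  · refine (hbot.div ((tendsto_exp_atBot.comp hlin').add tendsto_const_nhds) (by norm_num)).congr
      fun y => ?_
    simp only [Pi.div_apply, Function.comp_apply, neg_mul, exp_neg, add_mul, exp_add]
    field_simp

/-- Below `R` the bound uses `1 ≤ e^{R-y}`: the cut-off at `R` becomes an exponential weight,
whose Gaussian average is explicit. -/
lemma abs_le_add_mul_exp_sub_add_mul_exp {g : ℝ → ℝ} {ε M R ν : ℝ} (hε : 0 ≤ ε) (hM0 : 0 ≤ M)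
    (hM : ∀ y, |g y| ≤ M * (1 + exp (ν * y))) (hR : ∀ y ≥ R, |g y| ≤ ε) (y : ℝ) :
    |g y| ≤ ε + M * exp (R - y) + M * exp (ν * y) := by
  rcases le_or_gt R y with hy | hy
  · linarith [hR y hy, mul_nonneg hM0 (exp_pos (R - y)).le, mul_nonneg hM0 (exp_pos (ν * y)).le]
  · have : 1 ≤ exp (R - y) := one_le_exp (by linarith)
    nlinarith [hM y]

lemma abs_exp_mul_gaussianAverage_le {α k ε M R : ℝ} {φ : ℝ → ℝ}
    (hφ : ∀ y, |exp (α * y) * φ y| ≤ ε + M * exp (R - y) + M * exp ((k + α) * y)) (x s : ℝ) :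
    |exp (α * x) * gaussianAverage (fun η => φ (x + s * η))|
      ≤ ε * exp ((α * s) ^ 2) + M * exp (R - x) * exp (((α + 1) * s) ^ 2)
        + M * exp ((k + α) * x) * exp ((k * s) ^ 2) := by
  have hmul : exp (α * x) * gaussianAverage (fun η => φ (x + s * η))
      = gaussianAverage (fun η => exp (α * x) * φ (x + s * η)) := by
    simp only [gaussianAverage, mul_left_comm (exp (α * x)), ← integral_const_mul]
  rw [hmul]
  refine (abs_gaussianAverage_le_sum Finset.univ ![ε, M * exp (R - x), M * exp ((k + α) * x)]
    ![-(α * s), -((α + 1) * s), k * s] fun η => ?_).trans_eq (by simp [Fin.sum_univ_three])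
  have hsplit : exp (α * x) = exp (-(α * s) * η) * exp (α * (x + s * η)) := by
    rw [← exp_add]; ring_nf
  calc |exp (α * x) * φ (x + s * η)|
      = exp (-(α * s) * η) * |exp (α * (x + s * η)) * φ (x + s * η)| := by
        rw [hsplit, mul_assoc, abs_mul, abs_of_pos (exp_pos _)]
    _ ≤ exp (-(α * s) * η) * (ε + M * exp (R - (x + s * η)) + M * exp ((k + α) * (x + s * η))) :=
        mul_le_mul_of_nonneg_left (hφ _) (exp_pos _).le
    _ = _ := by
        simp only [Fin.sum_univ_three, Matrix.cons_val_zero, Matrix.cons_val_one,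
          Matrix.cons_val_two, Matrix.head_cons, Matrix.tail_cons]
        rw [mul_add, mul_add, mul_left_comm _ M, mul_left_comm _ M]
        simp only [mul_assoc, ← exp_add]
        ring_nf

lemma exp_sq_mul_le_of_abs_le {β s Λ S : ℝ} (hβ : |β| ≤ Λ) (hs : |s| ≤ S) :
    exp ((β * s) ^ 2) ≤ exp ((Λ * S) ^ 2) := by
  rw [exp_le_exp, ← sq_abs, abs_mul]
  exact pow_le_pow_left₀ (by positivity)
    (mul_le_mul hβ hs (abs_nonneg s) ((abs_nonneg β).trans hβ)) 2

lemma abs_exp_mul_gaussianAverage_le_of_abs_le {α k ε M R S s : ℝ} {φ : ℝ → ℝ}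
    (hε : 0 ≤ ε) (hM0 : 0 ≤ M)
    (hφ : ∀ y, |exp (α * y) * φ y| ≤ ε + M * exp (R - y) + M * exp ((k + α) * y))
    (hs : |s| ≤ S) (x : ℝ) :
    |exp (α * x) * gaussianAverage (fun η => φ (x + s * η))|
      ≤ exp (((|α| + 1 + |k|) * S) ^ 2) * (ε + (M * exp (R - x) + M * exp ((k + α) * x))) := by
  calc _ ≤ ε * exp ((α * s) ^ 2) + M * exp (R - x) * exp (((α + 1) * s) ^ 2)
        + M * exp ((k + α) * x) * exp ((k * s) ^ 2) := abs_exp_mul_gaussianAverage_le hφ x s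
    _ ≤ ε * exp (((|α| + 1 + |k|) * S) ^ 2) + M * exp (R - x) * exp (((|α| + 1 + |k|) * S) ^ 2)
        + M * exp ((k + α) * x) * exp (((|α| + 1 + |k|) * S) ^ 2) := by
      gcongr ε * ?_ + M * exp (R - x) * ?_ + M * exp ((k + α) * x) * ?_ <;>
        refine exp_sq_mul_le_of_abs_le ?_ hs <;>
        linarith [abs_nonneg α, abs_nonneg k, abs_add_le α 1, abs_one (α := ℝ)]
    _ = _ := by ring

theorem stmt_16_general (a α k : ℝ) (hkα : k + α < 0)
    (φ : ℝ → ℝ) (hφ : Continuous φ)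
    (h1 : Tendsto (fun x => Real.exp (α * x) * φ x) atTop (nhds 0))
    (h2 : Tendsto (fun x => φ x / Real.exp (k * x)) atBot (nhds 1))
    (τ₀ τ₁ : ℝ) :
    let w : ℝ → ℝ → ℝ := fun τ x =>
      (2 * Real.sqrt Real.pi)⁻¹ *
        ∫ η : ℝ, Real.exp (-η ^ 2 / 4) * φ (x + a * Real.sqrt τ * η)
    TendstoUniformlyOn (fun x τ => Real.exp (α * x) * w τ x) (fun _ => 0)
      atTop (Icc τ₀ τ₁) := by
  intro w
  obtain ⟨M, hM0, hM⟩ := exists_abs_exp_mul_le hkα hφ h1 h2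
  set C := exp (((|α| + 1 + |k|) * (|a| * √τ₁)) ^ 2)
  have hC : 0 < C := exp_pos _
  rw [Metric.tendstoUniformlyOn_iff]
  intro δ hδ
  have hε : 0 < δ / (2 * C) := by positivity
  obtain ⟨R, hR⟩ := Metric.tendsto_atTop.1 h1 _ hε
  have hφR := abs_le_add_mul_exp_sub_add_mul_exp hε.le hM0 hM fun y hy => by
    simpa using (hR y hy).le
  have hdecay : Tendsto (fun x => M * exp (R - x) + M * exp ((k + α) * x)) atTop (𝓝 0) := by
    simpa [sub_eq_add_neg] using ((tendsto_exp_atBot.comp (tendsto_atBot_add_const_left _ R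
      tendsto_neg_atTop_atBot)).const_mul M).add
      ((tendsto_exp_atBot.comp (tendsto_id.const_mul_atTop_of_neg hkα)).const_mul M)
  filter_upwards [hdecay.eventually (gt_mem_nhds hε)] with x hx τ hτ
  have hs : |a * √τ| ≤ |a| * √τ₁ := by
    rw [abs_mul, abs_of_nonneg (sqrt_nonneg τ)]
    exact mul_le_mul_of_nonneg_left (sqrt_le_sqrt hτ.2) (abs_nonneg a)
  rw [dist_zero_left, Real.norm_eq_abs]
  calc |exp (α * x) * w τ x|
      ≤ C * (δ / (2 * C) + (M * exp (R - x) + M * exp ((k + α) * x))) :=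
        abs_exp_mul_gaussianAverage_le_of_abs_le hε.le hM0 hφR hs x
    _ < C * (δ / (2 * C) + δ / (2 * C)) := by gcongr
    _ = δ := by field_simp; ring

/-- for the heat-kernel (Poisson) representation
`w(τ,x) = (2√π)⁻¹ ∫ e^{-η²/4} φ(x + a√τ η) dη` with `φ` continuous,
`e^{αx} φ(x) → 0` as `x → ∞` and `φ(x)/e^{kx} → 1` as `x → -∞` (`k + α < 0`),
one has `e^{αx} w(τ,x) → 0` as `x → +∞`, uniformly for `τ ∈ [τ₀, τ₁]`. -/
theorem stmt_16 (a α k : ℝ) (ha : 0 < a) (hα : 0 < α) (hkα : k + α < 0)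
    (φ : ℝ → ℝ) (hφ : Continuous φ)
    (h1 : Tendsto (fun x => Real.exp (α * x) * φ x) atTop (nhds 0))
    (h2 : Tendsto (fun x => φ x / Real.exp (k * x)) atBot (nhds 1))
    (τ₀ τ₁ : ℝ) (hτ0 : 0 < τ₀) (hτ01 : τ₀ < τ₁) :
    let w : ℝ → ℝ → ℝ := fun τ x =>
      (2 * Real.sqrt Real.pi)⁻¹ *
        ∫ η : ℝ, Real.exp (-η ^ 2 / 4) * φ (x + a * Real.sqrt τ * η)
    TendstoUniformlyOn (fun x τ => Real.exp (α * x) * w τ x) (fun _ => 0)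
      atTop (Icc τ₀ τ₁) :=
  stmt_16_general a α k hkα φ hφ h1 h2 τ₀ τ₁
end

section
/- Let a > 0, α > 0 and k be real with k + α < 0, and let φ : ℝ → ℝ be continuous with lim_{x→∞} e^{αx} φ(x) = 0 and lim_{x→−∞} φ(x)/e^{kx} = 1. For τ > 0 and x ∈ ℝ define w(τ,x) = (2√π)^{-1} ∫_{-∞}^{∞} e^{-η²/4} φ(x + a√τ·η) dη. Then for any 0 < τ₀ < τ₁, w(τ,x)/e^{k²a²τ + kx} → 1 as x → −∞, uniformly for τ ∈ [τ₀, τ₁]. -/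
/-!
Completing the square turns `w(τ,x) / e^{k²a²τ + kx}` into the Gaussian average
`(2√π)⁻¹ ∫ e^{-η²/4} ψ(x + 2ka²τ + a√τ η) dη` of `ψ = φ / e^{k·}`. The hypotheses make `ψ`
tend to `1` at `-∞` and grow at most like `e^{-(k+α)y}` at `+∞`, so by continuity
`|ψ y| ≤ C (1 + e^{-(k+α)y})`, which gives a Gaussian-integrable majorant uniform in `x ≤ 0`,
`τ ≤ τ₁`. Uniform convergence on `[τ₀, τ₁]` is convergence along the countably generated filter
`atBot ×ˢ 𝓟 [τ₀, τ₁]`, along which dominated convergence applies directly.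
-/

open Real Set Filter MeasureTheory Topology Asymptotics

lemma integrable_exp_neg_sq_div {c : ℝ} (hc : 0 < c) :
    Integrable fun η : ℝ => exp (-η ^ 2 / c) := by
  simpa only [neg_mul, one_div, ← div_eq_inv_mul, neg_div] using
    integrable_exp_neg_mul_sq (one_div_pos.2 hc)

lemma integral_exp_neg_sq_div_four : ∫ η : ℝ, exp (-η ^ 2 / 4) = 2 * √π := by
  have h := integral_gaussian (1 / 4)
  simp only [neg_mul, one_div, ← div_eq_inv_mul, ← neg_div] at h
  rw [h, show π / 4⁻¹ = 2 ^ 2 * π by ring, sqrt_mul (by positivity), sqrt_sq zero_le_two]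

/-- Completing the square: the shift `η ↦ η + 2 k b` trades the factor `exp (k ^ 2 * b ^ 2)` for
the weight `exp (-k y)` at the shifted point. -/
lemma integral_exp_neg_sq_mul_div_exp (φ : ℝ → ℝ) (k b x : ℝ) :
    (∫ η : ℝ, exp (-η ^ 2 / 4) * φ (x + b * η)) / exp (k ^ 2 * b ^ 2 + k * x) =
      ∫ η : ℝ, exp (-η ^ 2 / 4) *
        (φ (x + 2 * k * b ^ 2 + b * η) / exp (k * (x + 2 * k * b ^ 2 + b * η))) := by
  rw [← integral_div, ← integral_add_right_eq_self _ (2 * k * b)]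
  congr 1 with η
  have hexp : exp (-(η + 2 * k * b) ^ 2 / 4) = exp (-η ^ 2 / 4) * exp (k ^ 2 * b ^ 2 + k * x) /
      exp (k * (x + 2 * k * b ^ 2 + b * η)) := by
    rw [← exp_add, ← exp_sub]; ring_nf
  rw [hexp, show x + b * (η + 2 * k * b) = x + 2 * k * b ^ 2 + b * η by ring]
  field_simp

lemma integral_exp_neg_sq_mul_comp_sqrt_div_exp (φ : ℝ → ℝ) (k a x : ℝ) {τ : ℝ} (hτ : 0 ≤ τ) :
    (∫ η : ℝ, exp (-η ^ 2 / 4) * φ (x + a * √τ * η)) / exp (k ^ 2 * a ^ 2 * τ + k * x) =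
      ∫ η : ℝ, exp (-η ^ 2 / 4) * (φ (x + 2 * k * a ^ 2 * τ + a * √τ * η) /
        exp (k * (x + 2 * k * a ^ 2 * τ + a * √τ * η))) := by
  have h := integral_exp_neg_sq_mul_div_exp φ k (a * √τ) x
  rwa [mul_pow, sq_sqrt hτ, ← mul_assoc, ← mul_assoc] at h

lemma Continuous.exists_abs_le_mul_of_isBigO_cocompact {D : Type*} [TopologicalSpace D]
    {ψ ρ : D → ℝ} (hψ : Continuous ψ) (hρ : Continuous ρ) (hρ_pos : ∀ y, 0 < ρ y)
    (h : ψ =O[cocompact D] ρ) : ∃ C, ∀ y, |ψ y| ≤ C * ρ y := by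
  have hg : Continuous fun y => ψ y / ρ y := hψ.div hρ fun y => (hρ_pos y).ne'
  have hg1 : (fun y => ψ y / ρ y) =O[cocompact D] (1 : D → ℝ) :=
    (h.mul (isBigO_refl (fun y => (ρ y)⁻¹) _)).congr (fun y => (div_eq_mul_inv _ _).symm)
      fun y => mul_inv_cancel₀ (hρ_pos y).ne'
  obtain ⟨C, hC⟩ := isBounded_iff_forall_norm_le.1 (hg.isBounded_range_iff_isBigO.2 hg1)
  refine ⟨C, fun y => ?_⟩
  have := hC _ (mem_range_self y)
  rwa [norm_div, Real.norm_eq_abs, Real.norm_eq_abs, abs_of_pos (hρ_pos y),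
    div_le_iff₀ (hρ_pos y)] at this

lemma exists_abs_div_exp_le_mul_one_add_exp {φ : ℝ → ℝ} {α k : ℝ} (hφ : Continuous φ)
    (h1 : Tendsto (fun x => exp (α * x) * φ x) atTop (𝓝 0))
    (h2 : Tendsto (fun x => φ x / exp (k * x)) atBot (𝓝 1)) :
    ∃ C, ∀ y, |φ y / exp (k * y)| ≤ C * (1 + exp (-(k + α) * y)) := by
  have h_top : (fun y => φ y / exp (k * y)) =O[atTop] fun y => exp (-(k + α) * y) := by
    refine ((h1.isBigO_one ℝ).mul (isBigO_refl (fun y => exp (-(k + α) * y)) _)).congr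
      (fun y => ?_) fun y => one_mul _
    have : exp (α * y) * exp (-(k + α) * y) = (exp (k * y))⁻¹ := by
      rw [← exp_add, ← exp_neg]; ring_nf
    rw [div_eq_mul_inv, ← this]
    ring
  refine (hφ.div (by fun_prop) fun y => (exp_pos _).ne').exists_abs_le_mul_of_isBigO_cocompact
    (ρ := fun y => 1 + exp (-(k + α) * y)) (by fun_prop) (fun y => by positivity) ?_
  rw [cocompact_eq_atBot_atTop, isBigO_sup]
  refine ⟨(h2.isBigO_one ℝ).trans (isBigO_of_le _ fun y => ?_),
    h_top.trans (isBigO_of_le _ fun y => ?_)⟩ <;>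
  simp only [norm_one, Real.norm_of_nonneg (exp_pos _).le,
    Real.norm_of_nonneg (by positivity : 0 ≤ 1 + exp (-(k + α) * y))] <;>
  linarith [exp_pos (-(k + α) * y)]

theorem tendsto_integral_exp_neg_sq_mul_comp {ι : Type*} {l : Filter ι} [l.IsCountablyGenerated]
    {ψ : ℝ → ℝ} {c C β L : ℝ} (hψ : Continuous ψ) (hψc : Tendsto ψ atBot (𝓝 c)) (hβ : 0 ≤ β)
    (hψC : ∀ y, |ψ y| ≤ C * (1 + exp (β * y))) {u v : ι → ℝ} (hu : Tendsto u l atBot)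
    (hv : ∀ᶠ i in l, |v i| ≤ L) :
    Tendsto (fun i => ∫ η : ℝ, exp (-η ^ 2 / 4) * ψ (u i + v i * η)) l (𝓝 (2 * √π * c)) := by
  have hC : 0 ≤ C := by nlinarith [hψC 0, abs_nonneg (ψ 0), exp_pos (β * 0)]
  have hvη : ∀ i, |v i| ≤ L → ∀ η, v i * η ≤ L * |η| := fun i hi η =>
    (le_abs_self _).trans (abs_mul (v i) η ▸ mul_le_mul_of_nonneg_right hi (abs_nonneg η))
  rw [← integral_exp_neg_sq_div_four, ← integral_mul_const]
  refine tendsto_integral_filter_of_dominated_convergence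
    (fun η => C * (exp (-η ^ 2 / 4) + exp (2 * (β * L) ^ 2) * exp (-η ^ 2 / 8))) ?_ ?_ ?_ ?_
  · exact Eventually.of_forall fun i => (by fun_prop : Continuous _).aestronglyMeasurable
  · filter_upwards [hu.eventually_le_atBot 0, hv] with i hui hvi
    refine Eventually.of_forall fun η => ?_
    have hy : β * (u i + v i * η) ≤ β * L * |η| := by
      rw [mul_assoc]; exact mul_le_mul_of_nonneg_left (by linarith [hvη i hvi η]) hβ
    have hexp : exp (-η ^ 2 / 4) * exp (β * (u i + v i * η)) ≤
        exp (2 * (β * L) ^ 2) * exp (-η ^ 2 / 8) := by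
      rw [← exp_add, ← exp_add, exp_le_exp]
      -- `β L |η| ≤ 2 (β L)² + η² / 8`
      nlinarith [sq_nonneg (β * L - |η| / 4), sq_abs η]
    rw [Real.norm_eq_abs, abs_mul, abs_of_pos (exp_pos _)]
    calc exp (-η ^ 2 / 4) * |ψ (u i + v i * η)|
        ≤ exp (-η ^ 2 / 4) * (C * (1 + exp (β * (u i + v i * η)))) :=
          mul_le_mul_of_nonneg_left (hψC _) (exp_pos _).le
      _ = C * (exp (-η ^ 2 / 4) + exp (-η ^ 2 / 4) * exp (β * (u i + v i * η))) := by ring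
      _ ≤ _ := by gcongr
  · exact ((integrable_exp_neg_sq_div four_pos).add
      ((integrable_exp_neg_sq_div (by norm_num)).const_mul _)).const_mul _
  · refine Eventually.of_forall fun η => (hψc.comp ?_).const_mul _
    exact tendsto_atBot_add_right_of_ge' _ _ hu (hv.mono fun i hi => hvη i hi η)

theorem stmt_17_general (a α k : ℝ) (hα : 0 < α) (hkα : k + α < 0)
    (φ : ℝ → ℝ) (hφ : Continuous φ)
    (h1 : Tendsto (fun x => Real.exp (α * x) * φ x) atTop (nhds 0))
    (h2 : Tendsto (fun x => φ x / Real.exp (k * x)) atBot (nhds 1))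
    (τ₀ τ₁ : ℝ) (hτ0 : 0 < τ₀) :
    let w : ℝ → ℝ → ℝ := fun τ x =>
      (2 * Real.sqrt Real.pi)⁻¹ *
        ∫ η : ℝ, Real.exp (-η ^ 2 / 4) * φ (x + a * Real.sqrt τ * η)
    TendstoUniformlyOn
      (fun x τ => w τ x / Real.exp (k ^ 2 * a ^ 2 * τ + k * x)) (fun _ => 1)
      atBot (Icc τ₀ τ₁) := by
  intro w
  obtain ⟨C, hC⟩ := exists_abs_div_exp_le_mul_one_add_exp hφ h1 h2
  have hmem : ∀ᶠ q : ℝ × ℝ in atBot ×ˢ 𝓟 (Icc τ₀ τ₁), q.2 ∈ Icc τ₀ τ₁ :=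
    tendsto_principal.1 tendsto_snd
  have hu : Tendsto (fun q : ℝ × ℝ => q.1 + 2 * k * a ^ 2 * q.2) (atBot ×ˢ 𝓟 (Icc τ₀ τ₁)) atBot :=
    tendsto_atBot_add_right_of_ge' _ 0 tendsto_fst (hmem.mono fun q hq => by
      have : 0 ≤ a ^ 2 * q.2 := mul_nonneg (sq_nonneg a) (by linarith [hq.1])
      nlinarith)
  have hv : ∀ᶠ q : ℝ × ℝ in atBot ×ˢ 𝓟 (Icc τ₀ τ₁), |a * √q.2| ≤ |a| * √τ₁ :=
    hmem.mono fun q hq => by rw [abs_mul, abs_of_nonneg (sqrt_nonneg _)]; gcongr; exact hq.2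
  have hlim := tendsto_integral_exp_neg_sq_mul_comp (ψ := fun y => φ y / exp (k * y))
    (hφ.div (by fun_prop) fun y => (exp_pos _).ne') h2 (by linarith) hC hu hv
  rw [tendstoUniformlyOn_iff_tendsto]
  refine Uniform.tendsto_nhds_right.1 ?_
  convert (hlim.const_mul (2 * √π)⁻¹).congr' (hmem.mono fun q hq => ?_) using 2
  · field_simp
  · simp only [w]
    rw [mul_div_assoc, integral_exp_neg_sq_mul_comp_sqrt_div_exp _ _ _ _ (by linarith [hq.1])]

/-- for the heat-kernel (Poisson) representation
`w(τ,x) = (2√π)⁻¹ ∫ e^{-η²/4} φ(x + a√τ η) dη` with `φ` continuous,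
`e^{αx} φ(x) → 0` as `x → ∞` and `φ(x)/e^{kx} → 1` as `x → -∞` (`k + α < 0`),
one has `w(τ,x)/e^{k²a²τ + kx} → 1` as `x → -∞`, uniformly for `τ ∈ [τ₀, τ₁]`. -/
theorem stmt_17 (a α k : ℝ) (ha : 0 < a) (hα : 0 < α) (hkα : k + α < 0)
    (φ : ℝ → ℝ) (hφ : Continuous φ)
    (h1 : Tendsto (fun x => Real.exp (α * x) * φ x) atTop (nhds 0))
    (h2 : Tendsto (fun x => φ x / Real.exp (k * x)) atBot (nhds 1))
    (τ₀ τ₁ : ℝ) (hτ0 : 0 < τ₀) (hτ01 : τ₀ < τ₁) :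
    let w : ℝ → ℝ → ℝ := fun τ x =>
      (2 * Real.sqrt Real.pi)⁻¹ *
        ∫ η : ℝ, Real.exp (-η ^ 2 / 4) * φ (x + a * Real.sqrt τ * η)
    TendstoUniformlyOn
      (fun x τ => w τ x / Real.exp (k ^ 2 * a ^ 2 * τ + k * x)) (fun _ => 1)
      atBot (Icc τ₀ τ₁) :=
  stmt_17_general a α k hα hkα φ hφ h1 h2 τ₀ τ₁ hτ0
end
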